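/- arXiv:2406.07920 — 10 statements merged into one kernel-verified Lean document; each statement's English description precedes it below -/
import Mathlib

section
/- Let P₁,...,P_L be probability distributions on a finite set O, and let μ, ν be probability distributions on {1,...,L} with disjoint supports. Then the Bhattacharyya divergence between the mixtures satisfies D_B(E_{i∼μ}[P_i], E_{j∼ν}[P_j]) ≥ min_{i≠j} D_B(P_i, P_j) − log(L/2). -/
/-!
Write `BC(p, q) = ∑ₓ √(p x q x)` for the Bhattacharyya coefficient, so that `D_B = -log BC`.
Subadditivity of `√` on each mixture and bilinearity give
`BC(∑ᵢ μᵢ Pᵢ, ∑ⱼ νⱼ Pⱼ) ≤ ∑ᵢ ∑ⱼ √μᵢ √νⱼ BC(Pᵢ, Pⱼ)`. The diagonal terms vanish because the supports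
are disjoint, and every other `BC(Pᵢ, Pⱼ)` is at most `exp (-c)`. By Cauchy–Schwarz
`(∑ᵢ √μᵢ)² ≤ |supp μ|`, and then AM–GM with `|supp μ| + |supp ν| ≤ L` bounds
`(∑ᵢ √μᵢ)(∑ⱼ √νⱼ)` by `L / 2`. Taking `-log` gives the claim.
-/

open Finset Real

noncomputable section

variable {ι O : Type*} [Fintype ι]

def bhattacharyyaCoeff [Fintype O] (p q : O → ℝ) : ℝ := ∑ x, √(p x * q x)

def mixture (w : ι → ℝ) (P : ι → O → ℝ) (x : O) : ℝ := ∑ i, w i * P i x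

theorem Real.sqrt_sum_le_sum_sqrt {κ : Type*} (s : Finset κ) {f : κ → ℝ}
    (hf : ∀ i ∈ s, 0 ≤ f i) : √(∑ i ∈ s, f i) ≤ ∑ i ∈ s, √(f i) := by
  refine sqrt_le_iff.mpr ⟨sum_nonneg fun i _ => sqrt_nonneg _, ?_⟩
  calc ∑ i ∈ s, f i = ∑ i ∈ s, √(f i) ^ 2 := sum_congr rfl fun i hi => (sq_sqrt (hf i hi)).symm
    _ ≤ (∑ i ∈ s, √(f i)) ^ 2 := sum_sq_le_sq_sum_of_nonneg fun i _ => sqrt_nonneg _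

theorem sq_sum_sqrt_le_card_support_mul_sum {w : ι → ℝ} (hw : ∀ i, 0 ≤ w i) :
    (∑ i, √(w i)) ^ 2 ≤ #{i | w i ≠ 0} * ∑ i, w i := by
  have hsqrt : ∑ i with w i ≠ 0, √(w i) = ∑ i, √(w i) :=
    sum_filter_of_ne fun i _ h hi => h (by rw [hi, sqrt_zero])
  have hid : ∑ i with w i ≠ 0, w i = ∑ i, w i := sum_filter_of_ne fun i _ h => h
  rw [← hsqrt, ← hid]
  calc (∑ i with w i ≠ 0, √(w i)) ^ 2 ≤ #{i | w i ≠ 0} * ∑ i with w i ≠ 0, √(w i) ^ 2 :=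
        sq_sum_le_card_mul_sum_sq
    _ = _ := by simp only [sq_sqrt (hw _)]

theorem sum_sqrt_mul_sum_sqrt_le_card_div_two {μ ν : ι → ℝ}
    (hμ0 : ∀ i, 0 ≤ μ i) (hμ1 : ∑ i, μ i = 1) (hν0 : ∀ i, 0 ≤ ν i) (hν1 : ∑ i, ν i = 1)
    (hdisj : ∀ i, μ i = 0 ∨ ν i = 0) :
    (∑ i, √(μ i)) * (∑ j, √(ν j)) ≤ Fintype.card ι / 2 := by
  classical
  have hμ := sq_sum_sqrt_le_card_support_mul_sum hμ0
  have hν := sq_sum_sqrt_le_card_support_mul_sum hν0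
  rw [hμ1, mul_one] at hμ
  rw [hν1, mul_one] at hν
  have hcard : (#{i | μ i ≠ 0} + #{i | ν i ≠ 0} : ℝ) ≤ Fintype.card ι := by
    have hsupp : Disjoint ({i | μ i ≠ 0} : Finset ι) ({i | ν i ≠ 0} : Finset ι) :=
      disjoint_filter.mpr fun i _ hμi hνi => (hdisj i).elim hμi hνi
    exact_mod_cast (card_union_of_disjoint hsupp).symm.trans_le (card_le_univ _)
  nlinarith [sq_nonneg ((∑ i, √(μ i)) - ∑ j, √(ν j))]

variable {P : ι → O → ℝ}

theorem mixture_nonneg (hP : ∀ i x, 0 ≤ P i x) {w : ι → ℝ} (hw : ∀ i, 0 ≤ w i) (x : O) :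
    0 ≤ mixture w P x :=
  sum_nonneg fun i _ => mul_nonneg (hw i) (hP i x)

theorem sqrt_mixture_le_sum (hP : ∀ i x, 0 ≤ P i x) {w : ι → ℝ} (hw : ∀ i, 0 ≤ w i) (x : O) :
    √(mixture w P x) ≤ ∑ i, √(w i) * √(P i x) :=
  (sqrt_sum_le_sum_sqrt univ fun i _ => mul_nonneg (hw i) (hP i x)).trans_eq
    (sum_congr rfl fun i _ => sqrt_mul (hw i) _)

variable [Fintype O]

theorem bhattacharyyaCoeff_mixture_le_sum (hP : ∀ i x, 0 ≤ P i x) {μ ν : ι → ℝ}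
    (hμ : ∀ i, 0 ≤ μ i) (hν : ∀ i, 0 ≤ ν i) :
    bhattacharyyaCoeff (mixture μ P) (mixture ν P) ≤
      ∑ i, ∑ j, √(μ i) * √(ν j) * bhattacharyyaCoeff (P i) (P j) := by
  calc bhattacharyyaCoeff (mixture μ P) (mixture ν P)
      ≤ ∑ x, (∑ i, √(μ i) * √(P i x)) * ∑ j, √(ν j) * √(P j x) := by
        refine sum_le_sum fun x _ => ?_
        rw [sqrt_mul (mixture_nonneg hP hμ x)]
        exact mul_le_mul (sqrt_mixture_le_sum hP hμ x) (sqrt_mixture_le_sum hP hν x)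
          (sqrt_nonneg _) (sum_nonneg fun i _ => by positivity)
    _ = ∑ x, ∑ i, ∑ j, √(μ i) * √(ν j) * √(P i x * P j x) := by
        simp only [sum_mul_sum, sqrt_mul (hP _ _)]
        exact sum_congr rfl fun x _ => sum_congr rfl fun i _ => sum_congr rfl fun j _ => by ring
    _ = _ := by
        simp only [bhattacharyyaCoeff, mul_sum]
        rw [sum_comm]
        exact sum_congr rfl fun i _ => sum_comm

theorem bhattacharyyaCoeff_mixture_le_of_disjoint (hP : ∀ i x, 0 ≤ P i x) {μ ν : ι → ℝ}
    (hμ : ∀ i, 0 ≤ μ i) (hν : ∀ i, 0 ≤ ν i) (hdisj : ∀ i, μ i = 0 ∨ ν i = 0) {b : ℝ}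
    (hb : ∀ i j, i ≠ j → bhattacharyyaCoeff (P i) (P j) ≤ b) :
    bhattacharyyaCoeff (mixture μ P) (mixture ν P) ≤ (∑ i, √(μ i)) * (∑ j, √(ν j)) * b := by
  refine (bhattacharyyaCoeff_mixture_le_sum hP hμ hν).trans ?_
  rw [sum_mul_sum, sum_mul]
  refine sum_le_sum fun i _ => ?_
  rw [sum_mul]
  refine sum_le_sum fun j _ => ?_
  by_cases hij : i = j
  · subst hij
    rcases hdisj i with h | h <;> simp [h]
  · exact mul_le_mul_of_nonneg_left (hb i j hij) (by positivity)

theorem sqrt_mul_bhattacharyyaCoeff_le_mixture (hP : ∀ i x, 0 ≤ P i x) {μ ν : ι → ℝ}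
    (hμ : ∀ i, 0 ≤ μ i) (hν : ∀ i, 0 ≤ ν i) (i j : ι) :
    √(μ i * ν j) * bhattacharyyaCoeff (P i) (P j) ≤
      bhattacharyyaCoeff (mixture μ P) (mixture ν P) := by
  have hterm {w : ι → ℝ} (hw : ∀ i, 0 ≤ w i) (k : ι) (x : O) : w k * P k x ≤ mixture w P x :=
    single_le_sum (f := fun i => w i * P i x) (fun i _ => mul_nonneg (hw i) (hP i x)) (mem_univ k)
  rw [bhattacharyyaCoeff, bhattacharyyaCoeff, mul_sum]
  refine sum_le_sum fun x _ => ?_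
  rw [← sqrt_mul (mul_nonneg (hμ i) (hν j))]
  refine sqrt_le_sqrt ?_
  calc μ i * ν j * (P i x * P j x) = (μ i * P i x) * (ν j * P j x) := by ring
    _ ≤ mixture μ P x * mixture ν P x :=
      mul_le_mul (hterm hμ i x) (hterm hν j x) (mul_nonneg (hν j) (hP j x))
        (mixture_nonneg hP hμ x)

theorem bhattacharyyaCoeff_eq_zero_of_mixture_eq_zero (hP : ∀ i x, 0 ≤ P i x) {μ ν : ι → ℝ}
    (hμ : ∀ i, 0 ≤ μ i) (hν : ∀ i, 0 ≤ ν i)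
    (h : bhattacharyyaCoeff (mixture μ P) (mixture ν P) = 0) {i j : ι} (hi : μ i ≠ 0)
    (hj : ν j ≠ 0) : bhattacharyyaCoeff (P i) (P j) = 0 := by
  have hle := sqrt_mul_bhattacharyyaCoeff_le_mixture hP hμ hν i j
  rw [h] at hle
  have hpos : 0 < √(μ i * ν j) := sqrt_pos.mpr (mul_pos ((hμ i).lt_of_ne' hi) ((hν j).lt_of_ne' hj))
  exact le_antisymm (nonpos_of_mul_nonpos_right hle hpos) (sum_nonneg fun x _ => sqrt_nonneg _)

end

theorem Real.le_exp_neg_of_le_neg_log {a c : ℝ} (ha : 0 ≤ a) (h : c ≤ -log a) : a ≤ exp (-c) := by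
  rcases ha.eq_or_lt with rfl | ha
  · exact (exp_pos _).le
  · rw [← exp_log ha]
    exact exp_le_exp.mpr (by linarith)

theorem Real.sub_log_le_neg_log {B K c : ℝ} (hB : 0 ≤ B) (hBK : B ≤ K * exp (-c))
    (hB0 : B = 0 → c ≤ log K) : c - log K ≤ -log B := by
  rcases hB.eq_or_lt with rfl | hBpos
  · simpa using hB0 rfl
  · have hK : 0 < K := pos_of_mul_pos_left (hBpos.trans_le hBK) (exp_pos _).le
    have := log_le_log hBpos hBK
    rw [log_mul hK.ne' (exp_ne_zero _), log_exp] at this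
    linarith

theorem bhattacharyya_mixture_lower_bound_general
    {O : Type*} [Fintype O] {L : ℕ} (P : Fin L → O → ℝ)
    (hP0 : ∀ i x, 0 ≤ P i x)
    (μ ν : Fin L → ℝ)
    (hμ0 : ∀ i, 0 ≤ μ i) (hμ1 : ∑ i, μ i = 1)
    (hν0 : ∀ i, 0 ≤ ν i) (hν1 : ∑ i, ν i = 1)
    (hdisj : ∀ i, μ i = 0 ∨ ν i = 0)
    (c : ℝ) (hc : ∀ i j, i ≠ j → c ≤ -Real.log (∑ x, Real.sqrt (P i x * P j x))) :
    -Real.log (∑ x, Real.sqrt ((∑ i, μ i * P i x) * (∑ j, ν j * P j x))) ≥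
      c - Real.log ((L : ℝ) / 2) := by
  change c - log (L / 2) ≤ -log (bhattacharyyaCoeff (mixture μ P) (mixture ν P))
  refine sub_log_le_neg_log (sum_nonneg fun x _ => sqrt_nonneg _) ?_ fun hB0 => ?_
  · have hsqrt := sum_sqrt_mul_sum_sqrt_le_card_div_two hμ0 hμ1 hν0 hν1 hdisj
    rw [Fintype.card_fin] at hsqrt
    exact (bhattacharyyaCoeff_mixture_le_of_disjoint hP0 hμ0 hν0 hdisj fun i j hij =>
      le_exp_neg_of_le_neg_log (sum_nonneg fun x _ => sqrt_nonneg _) (hc i j hij)).trans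
      (mul_le_mul_of_nonneg_right hsqrt (exp_pos _).le)
  · -- `log 0 = 0` on the left, so `c ≤ log (L / 2)` must come from some orthogonal `P i`, `P j`
    obtain ⟨i, -, hi⟩ := exists_ne_zero_of_sum_ne_zero (hμ1.trans_ne one_ne_zero)
    obtain ⟨j, -, hj⟩ := exists_ne_zero_of_sum_ne_zero (hν1.trans_ne one_ne_zero)
    have hij : i ≠ j := by rintro rfl; exact (hdisj i).elim hi hj
    have hL : (2 : ℝ) ≤ L := mod_cast Fin.nontrivial_iff_two_le.mp ⟨⟨i, j, hij⟩⟩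
    have hc0 := hc i j hij
    rw [show (∑ x, √(P i x * P j x)) = 0 from
      bhattacharyyaCoeff_eq_zero_of_mixture_eq_zero hP0 hμ0 hν0 hB0 hi hj, log_zero] at hc0
    linarith [log_nonneg (show (1 : ℝ) ≤ L / 2 by linarith)]

/-- For probability distributions `P₁,...,P_L` on a finite set `O`, and
mixing distributions `μ, ν` on `[L]` with disjoint supports, the Bhattacharyya divergence
between the mixtures is at least `min_{i≠j} D_B(P_i,P_j) - log(L/2)`. The minimum is
expressed via an arbitrary lower bound `c` on all pairwise divergences. -/
theorem bhattacharyya_mixture_lower_bound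
    {O : Type*} [Fintype O] {L : ℕ} (P : Fin L → O → ℝ)
    (hP0 : ∀ i x, 0 ≤ P i x) (hP1 : ∀ i, ∑ x, P i x = 1)
    (μ ν : Fin L → ℝ)
    (hμ0 : ∀ i, 0 ≤ μ i) (hμ1 : ∑ i, μ i = 1)
    (hν0 : ∀ i, 0 ≤ ν i) (hν1 : ∑ i, ν i = 1)
    (hdisj : ∀ i, μ i = 0 ∨ ν i = 0)
    (c : ℝ) (hc : ∀ i j, i ≠ j → c ≤ -Real.log (∑ x, Real.sqrt (P i x * P j x))) :
    -Real.log (∑ x, Real.sqrt ((∑ i, μ i * P i x) * (∑ j, ν j * P j x))) ≥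
      c - Real.log ((L : ℝ) / 2) :=
  bhattacharyya_mixture_lower_bound_general P hP0 μ ν hμ0 hμ1 hν0 hν1 hdisj c hc
end

section
/- Suppose P₁,...,P_L are probability distributions on a finite set O with D_B(P_i, P_j) ≥ log(2L) for all i ≠ j. Let M ∈ ℝ^{O×L} be the matrix whose columns are P₁,...,P_L. Then there exists a matrix M⁺ ∈ ℝ^{L×O} with induced ℓ¹→ℓ¹ operator norm at most 2 such that M⁺M = I_L. -/
/-!
Let `M` have columns `P i` and let `W x i = P i x / ∑ₖ P k x` be the posterior of `i` given `x`
under the uniform prior. The confusion matrix `H = Mᵀ W` is row-stochastic, and its off-diagonal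
entries are at most half the Bhattacharyya coefficients (`a b / s ≤ √(a b) / 2` when
`a + b ≤ s`), hence at most `1 / (4L)`. So `‖1 - H‖ ≤ 1/2` in the `ℓ∞`-operator norm (maximum
row sum), `H` has a right inverse `H'` of norm at most `2` by the Neumann series, and
`M⁺ = (W H')ᵀ` works: `M⁺ M = (Mᵀ W H')ᵀ = 1`, and the columns of `M⁺` are rows of `W H'`, whose
`ℓ¹` norms are at most `‖W‖ ‖H'‖ ≤ 2`.
-/

open Matrix Finset

theorem exists_mul_eq_one_norm_le_of_norm_one_sub_lt_one {R : Type*} [NormedRing R]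
    [HasSummableGeomSeries R] {x : R} (h : ‖1 - x‖ < 1) :
    ∃ y : R, x * y = 1 ∧ ‖y‖ ≤ ‖(1 : R)‖ / (1 - ‖1 - x‖) := by
  set u := Units.oneSub (1 - x) h
  have hu : (u : R) = x := by simp [u]
  refine ⟨↑u⁻¹, by rw [← hu, Units.mul_inv], ?_⟩
  have hy : (↑u⁻¹ : R) = 1 + ↑u⁻¹ * (1 - x) := by
    rw [mul_sub, mul_one, ← hu, Units.inv_mul]; abel
  have := calc ‖(↑u⁻¹ : R)‖ = ‖1 + ↑u⁻¹ * (1 - x)‖ := congrArg _ hy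
    _ ≤ ‖(1 : R)‖ + ‖(↑u⁻¹ : R)‖ * ‖1 - x‖ :=
      (norm_add_le _ _).trans (by gcongr; exact norm_mul_le _ _)
  rw [le_div_iff₀ (sub_pos.2 h)]
  linarith

theorem mul_div_le_sqrt_mul_div_two {a b s : ℝ} (ha : 0 ≤ a) (hb : 0 ≤ b) (hs : a + b ≤ s) :
    a * (b / s) ≤ √(a * b) / 2 := by
  have amgm : 2 * √(a * b) ≤ a + b := by
    rw [Real.sqrt_mul ha]
    nlinarith [Real.sq_sqrt ha, Real.sq_sqrt hb, sq_nonneg (√a - √b)]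
  rcases (Real.sqrt_nonneg (a * b)).eq_or_lt with h | h
  · rw [eq_comm, Real.sqrt_eq_zero (mul_nonneg ha hb)] at h
    rw [mul_div_assoc', h, zero_div, Real.sqrt_zero, zero_div]
  · rw [mul_div_assoc', div_le_div_iff₀ (by linarith) two_pos]
    nlinarith [Real.mul_self_sqrt (mul_nonneg ha hb)]

theorem le_inv_of_log_le_neg_log {b c : ℝ} (hb : 0 ≤ b) (hc : 0 < c)
    (h : Real.log c ≤ -Real.log b) : b ≤ c⁻¹ := by
  rcases hb.eq_or_lt with rfl | hb
  · positivity
  · rwa [← Real.log_le_log_iff hb (inv_pos.2 hc), Real.log_inv, le_neg]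

section Posterior

variable {O ι : Type*} [Fintype ι] {P : ι → O → ℝ}

variable (P) in
/-- Rows `x` with `∑ k, P k x = 0` are `0`, since `a / 0 = 0`. -/
noncomputable def posterior : Matrix O ι ℝ := of fun x i => P i x / ∑ k, P k x

theorem posterior_nonneg (hP : ∀ i x, 0 ≤ P i x) (x : O) (i : ι) : 0 ≤ posterior P x i :=
  div_nonneg (hP i x) (sum_nonneg fun k _ => hP k x)

theorem sum_posterior_le_one (x : O) : ∑ i, posterior P x i ≤ 1 := by
  simp only [posterior, of_apply, ← sum_div]
  exact div_self_le_one _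

theorem mul_sum_posterior (hP : ∀ i x, 0 ≤ P i x) (i : ι) (x : O) :
    P i x * ∑ j, posterior P x j = P i x := by
  simp only [posterior, of_apply, ← sum_div]
  rcases (sum_nonneg fun k _ => hP k x).eq_or_lt with h | h
  · have : P i x = 0 := le_antisymm (h ▸ single_le_sum (fun k _ => hP k x) (mem_univ i)) (hP i x)
    rw [this, zero_mul]
  · rw [div_self h.ne', mul_one]

theorem of_mul_posterior_apply_nonneg [Fintype O] (hP : ∀ i x, 0 ≤ P i x) (i j : ι) :
    0 ≤ (of P * posterior P) i j :=
  sum_nonneg fun x _ => mul_nonneg (hP i x) (posterior_nonneg hP x j)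

theorem sum_of_mul_posterior_apply [Fintype O] (hP : ∀ i x, 0 ≤ P i x) (i : ι) :
    ∑ j, (of P * posterior P) i j = ∑ x, P i x := by
  simp only [mul_apply, of_apply]
  rw [sum_comm]
  simp only [← mul_sum, mul_sum_posterior hP]

theorem of_mul_posterior_apply_le [Fintype O] (hP : ∀ i x, 0 ≤ P i x) {i j : ι} (hij : i ≠ j) :
    (of P * posterior P) i j ≤ (∑ x, √(P i x * P j x)) / 2 := by
  classical
  rw [mul_apply, sum_div]
  refine sum_le_sum fun x _ => mul_div_le_sqrt_mul_div_two (hP i x) (hP j x) ?_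
  rw [of_apply, ← sum_pair (f := fun k => P k x) hij]
  exact sum_le_univ_sum_of_nonneg fun k => hP k x

end Posterior

section LinftyOpNorm

attribute [local instance] Matrix.linftyOpSeminormedAddCommGroup
  Matrix.linftyOpNormedAddCommGroup Matrix.linftyOpNormedRing Matrix.linftyOpNormedSpace

namespace Matrix

variable {m n α : Type*} [Fintype m] [Fintype n]

theorem linfty_opNorm_le_iff [SeminormedAddCommGroup α] {A : Matrix m n α} {r : ℝ}
    (hr : 0 ≤ r) : ‖A‖ ≤ r ↔ ∀ i, ∑ j, ‖A i j‖ ≤ r := by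
  change ‖fun i => WithLp.toLp 1 (A i)‖ ≤ r ↔ _
  simp [pi_norm_le_iff_of_nonneg hr, PiLp.norm_eq_of_L1]

theorem sum_norm_le_linfty_opNorm [SeminormedAddCommGroup α] (A : Matrix m n α) (i : m) :
    ∑ j, ‖A i j‖ ≤ ‖A‖ :=
  (linfty_opNorm_le_iff (norm_nonneg A)).1 le_rfl i

theorem sum_abs_one_sub_apply [DecidableEq n] {H : Matrix n n ℝ} (hH : ∀ i j, 0 ≤ H i j)
    {i : n} (hrow : ∑ j, H i j = 1) : ∑ j, |(1 - H) i j| = 2 * ∑ j ∈ univ.erase i, H i j := by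
  have hdiag : H i i + ∑ j ∈ univ.erase i, H i j = 1 := by
    rw [add_sum_erase _ _ (mem_univ i), hrow]
  have hoff : ∀ j ∈ univ.erase i, |(1 - H) i j| = H i j := fun j hj => by
    rw [sub_apply, one_apply_ne (ne_of_mem_erase hj).symm, zero_sub, abs_neg,
      abs_of_nonneg (hH i j)]
  rw [← add_sum_erase _ _ (mem_univ i), sum_congr rfl hoff, sub_apply, one_apply_eq,
    abs_of_nonneg (by linarith [sum_nonneg fun j (_ : j ∈ univ.erase i) => hH i j])]
  linarith

theorem linfty_opNorm_one_le [NormedRing α] [NormOneClass α] [DecidableEq n] :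
    ‖(1 : Matrix n n α)‖ ≤ 1 := by
  rw [← diagonal_one, linfty_opNorm_diagonal]
  exact pi_norm_le_iff_of_nonneg zero_le_one |>.2 fun i => by simp

theorem linfty_opNorm_one_sub_le [DecidableEq n] {H : Matrix n n ℝ} (hH : ∀ i j, 0 ≤ H i j)
    (hrow : ∀ i, ∑ j, H i j = 1) {ε : ℝ} (hε : 0 ≤ ε) (hoff : ∀ i j, i ≠ j → H i j ≤ ε) :
    ‖1 - H‖ ≤ 2 * (Fintype.card n * ε) := by
  refine (linfty_opNorm_le_iff (by positivity)).2 fun i => ?_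
  simp_rw [Real.norm_eq_abs, sum_abs_one_sub_apply hH (hrow i)]
  gcongr
  calc ∑ j ∈ univ.erase i, H i j ≤ ∑ _j ∈ univ.erase i, ε :=
        sum_le_sum fun j hj => hoff i j (ne_of_mem_erase hj).symm
    _ ≤ Fintype.card n * ε := by
        rw [sum_const, nsmul_eq_mul]; gcongr; exact_mod_cast card_erase_le

end Matrix

variable {O ι : Type*} [Fintype ι] {P : ι → O → ℝ}

theorem linfty_opNorm_posterior_le_one [Fintype O] (hP : ∀ i x, 0 ≤ P i x) :
    ‖posterior P‖ ≤ 1 :=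
  (linfty_opNorm_le_iff zero_le_one).2 fun x => by
    simpa only [Real.norm_eq_abs, abs_of_nonneg (posterior_nonneg hP x _)] using
      sum_posterior_le_one x

theorem exists_left_inverse_of_sum_sqrt_mul_le [Fintype O] [DecidableEq ι]
    (hP0 : ∀ i x, 0 ≤ P i x) (hP1 : ∀ i, ∑ x, P i x = 1)
    (hBC : ∀ i j, i ≠ j → ∑ x, √(P i x * P j x) ≤ (2 * Fintype.card ι : ℝ)⁻¹) :
    ∃ Minv : Matrix ι O ℝ, (∀ x, ∑ i, |Minv i x| ≤ 2) ∧ Minv * of (fun x i => P i x) = 1 := by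
  set H := of P * posterior P
  have hoff : ∀ i j, i ≠ j → H i j ≤ (4 * Fintype.card ι : ℝ)⁻¹ := fun i j hij =>
    calc H i j ≤ (∑ x, √(P i x * P j x)) / 2 := of_mul_posterior_apply_le hP0 hij
      _ ≤ (2 * Fintype.card ι : ℝ)⁻¹ / 2 := by gcongr; exact hBC i j hij
      _ = (4 * Fintype.card ι : ℝ)⁻¹ := by ring
  have hH : ‖1 - H‖ ≤ 1 / 2 := by
    refine (linfty_opNorm_one_sub_le (fun i j => of_mul_posterior_apply_nonneg hP0 i j)
      (fun i => (sum_of_mul_posterior_apply hP0 i).trans (hP1 i)) (by positivity) hoff).trans ?_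
    have : (Fintype.card ι : ℝ) * (Fintype.card ι : ℝ)⁻¹ ≤ 1 := mul_inv_le_one
    calc _ = (Fintype.card ι : ℝ) * (Fintype.card ι : ℝ)⁻¹ / 2 := by ring
      _ ≤ 1 / 2 := by gcongr
  have : CompleteSpace (Matrix ι ι ℝ) := FiniteDimensional.complete ℝ _
  obtain ⟨H', hHH', hH'⟩ := exists_mul_eq_one_norm_le_of_norm_one_sub_lt_one
    (hH.trans_lt one_half_lt_one)
  refine ⟨(posterior P * H')ᵀ, fun x => ?_, ?_⟩
  · calc ∑ i, |(posterior P * H')ᵀ i x| = ∑ i, ‖(posterior P * H') x i‖ := by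
          simp only [transpose_apply, Real.norm_eq_abs]
      _ ≤ ‖posterior P * H'‖ := sum_norm_le_linfty_opNorm _ x
      _ ≤ ‖posterior P‖ * ‖H'‖ := linfty_opNorm_mul _ _
      _ ≤ 1 * (1 / (1 / 2)) := by
          gcongr
          · exact linfty_opNorm_posterior_le_one hP0
          · refine hH'.trans (div_le_div₀ zero_le_one linfty_opNorm_one_le one_half_pos ?_)
            linarith
      _ = 2 := by norm_num
  · rw [← transpose_transpose (of fun x i => P i x), ← transpose_mul, ← Matrix.mul_assoc]
    exact (congrArg transpose hHH').trans transpose_one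

end LinftyOpNorm

/-- If `P₁,...,P_L` are probability distributions on a finite set `O` with
pairwise Bhattacharyya divergence at least `log(2L)`, and `M ∈ ℝ^{O×L}` is the matrix
whose columns are the `Pᵢ`, then there exists `M⁺ ∈ ℝ^{L×O}` with ℓ¹→ℓ¹ operator norm
(maximum column ℓ¹ norm) at most 2 such that `M⁺ M = I_L`. -/
theorem exists_left_inverse_of_bhattacharyya_sep
    {O : Type*} [Fintype O] {L : ℕ} (P : Fin L → O → ℝ)
    (hP0 : ∀ i x, 0 ≤ P i x) (hP1 : ∀ i, ∑ x, P i x = 1)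
    (hsep : ∀ i j, i ≠ j →
      -Real.log (∑ x, Real.sqrt (P i x * P j x)) ≥ Real.log (2 * (L : ℝ))) :
    ∃ Minv : Matrix (Fin L) O ℝ,
      (∀ x : O, ∑ i, |Minv i x| ≤ 2) ∧
      Minv * (Matrix.of fun (x : O) (i : Fin L) => P i x) = 1 := by
  refine exists_left_inverse_of_sum_sqrt_mul_le hP0 hP1 fun i j hij => ?_
  have hL : (0 : ℝ) < 2 * L := by have := i.pos; positivity
  rw [Fintype.card_fin]
  exact le_inv_of_log_le_neg_log (sum_nonneg fun x _ => Real.sqrt_nonneg _) hL (hsep i j hij)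
end

section
/- For any reals λ₁,...,λ_k ∈ [-1,1] and δ ∈ [0,1), it holds that ∏_{i=1}^k (1+δλᵢ) + ∏_{i=1}^k (1-δλᵢ) ≥ 2(1-δ²)^{⌊k/2⌋}. -/
/-!
The left-hand side is affine in each `λᵢ`, so on the cube `[-1,1]ᵏ` it is minimised at a vertex.
At a vertex with `i` coordinates equal to `1` and `i + t` equal to `-1` (or vice versa) it equals
`(1 - δ²)ⁱ ((1 - δ)ᵗ + (1 + δ)ᵗ)`; the bracket is at least `2` by Bernoulli's inequality, and
`i ≤ ⌊k/2⌋`.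
-/

open Set

lemma two_le_one_sub_pow_add_one_add_pow {δ : ℝ} (hδ : |δ| ≤ 2) (n : ℕ) :
    2 ≤ (1 - δ) ^ n + (1 + δ) ^ n := by
  obtain ⟨hδl, hδr⟩ := abs_le.1 hδ
  have hsub := one_add_mul_le_pow (a := -δ) (by linarith) n
  have hadd := one_add_mul_le_pow (a := δ) hδl n
  rw [← sub_eq_add_neg] at hsub
  linarith

lemma two_mul_one_sub_sq_pow_half_le {δ : ℝ} (hδ : |δ| ≤ 1) (i j : ℕ) :
    2 * (1 - δ ^ 2) ^ ((i + j) / 2) ≤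
      (1 + δ) ^ i * (1 - δ) ^ j + (1 - δ) ^ i * (1 + δ) ^ j := by
  wlog hij : i ≤ j generalizing i j
  · have := this j i (by omega)
    rw [Nat.add_comm] at this
    linarith
  obtain ⟨t, rfl⟩ := Nat.exists_eq_add_of_le hij
  have hsq_nonneg : 0 ≤ 1 - δ ^ 2 := by nlinarith [abs_le.1 hδ]
  have hsq_le_one : 1 - δ ^ 2 ≤ 1 := by nlinarith
  have hfactor : (1 + δ) ^ i * (1 - δ) ^ (i + t) + (1 - δ) ^ i * (1 + δ) ^ (i + t)
      = (1 - δ ^ 2) ^ i * ((1 - δ) ^ t + (1 + δ) ^ t) := by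
    rw [show 1 - δ ^ 2 = (1 + δ) * (1 - δ) by ring, pow_add, pow_add, mul_pow]
    ring
  have hpow : (1 - δ ^ 2) ^ ((i + (i + t)) / 2) ≤ (1 - δ ^ 2) ^ i :=
    pow_le_pow_of_le_one hsq_nonneg hsq_le_one (by omega)
  have htwo := two_le_one_sub_pow_add_one_add_pow (hδ.trans one_le_two) t
  rw [hfactor]
  nlinarith [pow_nonneg hsq_nonneg i]

lemma sub_le_add_mul_or_add_le_add_mul {x : ℝ} (hx : x ∈ Icc (-1) 1) (a b : ℝ) :
    a - b ≤ a + b * x ∨ a + b ≤ a + b * x := by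
  rcases le_total 0 b with hb | hb
  · left; nlinarith [hx.1]
  · right; nlinarith [hx.2]

-- The weights `α`, `β` make the induction go through: fixing `λ₀ = ±1` rescales them by `1 ± δ`.
lemma exists_vertex_le_smul_prod_add_smul_prod (δ : ℝ) {k : ℕ} (l : Fin k → ℝ)
    (hl : ∀ i, l i ∈ Icc (-1) 1) (α β : ℝ) :
    ∃ i j, i + j = k ∧
      α * ((1 + δ) ^ i * (1 - δ) ^ j) + β * ((1 - δ) ^ i * (1 + δ) ^ j) ≤
        α * ∏ i, (1 + δ * l i) + β * ∏ i, (1 - δ * l i) := by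
  induction k generalizing α β with
  | zero => exact ⟨0, 0, rfl, by simp⟩
  | succ k ih =>
    simp only [Fin.prod_univ_succ]
    set A := ∏ i : Fin k, (1 + δ * l i.succ)
    set B := ∏ i : Fin k, (1 - δ * l i.succ)
    have hl' : ∀ i : Fin k, l i.succ ∈ Icc (-1) 1 := fun i => hl i.succ
    have hsplit : α * ((1 + δ * l 0) * A) + β * ((1 - δ * l 0) * B)
        = (α * A + β * B) + δ * (α * A - β * B) * l 0 := by ring
    rw [hsplit]
    rcases sub_le_add_mul_or_add_le_add_mul (hl 0) (α * A + β * B) (δ * (α * A - β * B))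
      with hminus | hplus
    · obtain ⟨i, j, hij, h⟩ := ih (fun i => l i.succ) hl' (α * (1 - δ)) (β * (1 + δ))
      refine ⟨i, j + 1, by omega, ?_⟩
      calc _ = α * (1 - δ) * ((1 + δ) ^ i * (1 - δ) ^ j)
              + β * (1 + δ) * ((1 - δ) ^ i * (1 + δ) ^ j) := by ring
        _ ≤ α * (1 - δ) * A + β * (1 + δ) * B := h
        _ = _ := by ring
        _ ≤ _ := hminus
    · obtain ⟨i, j, hij, h⟩ := ih (fun i => l i.succ) hl' (α * (1 + δ)) (β * (1 - δ))
      refine ⟨i + 1, j, by omega, ?_⟩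
      calc _ = α * (1 + δ) * ((1 + δ) ^ i * (1 - δ) ^ j)
              + β * (1 - δ) * ((1 - δ) ^ i * (1 + δ) ^ j) := by ring
        _ ≤ α * (1 + δ) * A + β * (1 - δ) * B := h
        _ = _ := by ring
        _ ≤ _ := hplus

theorem prod_one_add_mul_add_prod_one_sub_mul_ge_general
    {k : ℕ} (l : Fin k → ℝ) (hl : ∀ i, -1 ≤ l i ∧ l i ≤ 1)
    (δ : ℝ) (hδ0 : 0 ≤ δ) (hδ1 : δ < 1) :
    (∏ i, (1 + δ * l i)) + ∏ i, (1 - δ * l i) ≥ 2 * (1 - δ ^ 2) ^ (k / 2) := by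
  obtain ⟨i, j, rfl, hvertex⟩ := exists_vertex_le_smul_prod_add_smul_prod δ l hl 1 1
  have hδ : |δ| ≤ 1 := abs_le.2 ⟨by linarith, hδ1.le⟩
  simp only [one_mul] at hvertex
  exact (two_mul_one_sub_sq_pow_half_le hδ i j).trans hvertex

/-- For reals `λ₁,...,λ_k ∈ [-1,1]` and `δ ∈ [0,1)`,
`∏ (1+δλᵢ) + ∏ (1-δλᵢ) ≥ 2(1-δ²)^⌊k/2⌋`. -/
theorem prod_one_add_mul_add_prod_one_sub_mul_ge
    {k : ℕ} (hk : 1 ≤ k) (l : Fin k → ℝ) (hl : ∀ i, -1 ≤ l i ∧ l i ≤ 1)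
    (δ : ℝ) (hδ0 : 0 ≤ δ) (hδ1 : δ < 1) :
    (∏ i, (1 + δ * l i)) + ∏ i, (1 - δ * l i) ≥ 2 * (1 - δ ^ 2) ^ (k / 2) :=
  prod_one_add_mul_add_prod_one_sub_mul_ge_general l hl δ hδ0 hδ1
end

section
/- For any integers N ≥ 2 and d ≥ ⌈11·log N⌉ (natural logarithm), there exist vectors x₁,...,x_N ∈ {-1,+1}^d such that ‖xᵢ - xⱼ‖₁ ≥ d/2 for all i ≠ j. -/
open Finset
open scoped symmDiff

/-!
Gilbert–Varshamov. Encode sign vectors as subsets of `Fin d`; two of them are at `ℓ¹` distance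
twice the size of the symmetric difference. Choose the subsets greedily, each at symmetric
difference at least `⌈d/4⌉` from the previous ones: this never gets stuck as long as `N` Hamming
balls of radius `< d/4` cannot cover all `2^d` subsets. Weighting the binomial expansion of `4^d`
by `3^(d-k)` bounds such a ball by `4^d / 3^(3d/4)`, and `N ≤ e^(d/8) ≤ (27/16)^(d/4)`, so
`N` balls have at most `2^d` points.
-/

theorem exists_fin_pairwise_not_rel {α : Type*} [Fintype α] (r : α → α → Prop)
    [DecidableRel r] (hsymm : ∀ a b, r a b → r b a) {S : ℕ} (hS : 0 < S)
    (hball : ∀ a, #{b | r a b} ≤ S) :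
    ∀ N, N * S ≤ Fintype.card α → ∃ f : Fin N → α, ∀ i j, i ≠ j → ¬ r (f i) (f j)
  | 0, _ => ⟨Fin.elim0, fun i => i.elim0⟩
  | N + 1, hN => by
    classical
    obtain ⟨f, hf⟩ := exists_fin_pairwise_not_rel r hsymm hS hball N (by nlinarith)
    have hcover : #(univ.biUnion fun j => ({b | r (f j) b} : Finset α)) < #(univ : Finset α) :=
      calc _ ≤ ∑ j, #({b | r (f j) b} : Finset α) := card_biUnion_le
        _ ≤ ∑ _j : Fin N, S := sum_le_sum fun j _ => hball (f j)
        _ < #(univ : Finset α) := by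
          rw [sum_const, card_univ, card_univ, Fintype.card_fin, smul_eq_mul]; nlinarith
    obtain ⟨v, -, hv⟩ := exists_mem_notMem_of_card_lt_card hcover
    have hfar : ∀ j, ¬ r (f j) v := fun j h => hv (mem_biUnion.2 ⟨j, mem_univ _, by simpa⟩)
    refine ⟨Fin.cons v f, fun i j hij => ?_⟩
    cases i using Fin.cases <;> cases j using Fin.cases
    · exact absurd rfl hij
    · exact fun h => hfar _ (hsymm _ _ h)
    · exact hfar _
    · exact hf _ _ (by simpa using hij)

theorem card_filter_card_symmDiff_lt {ι : Type*} [Fintype ι] [DecidableEq ι]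
    (s : Finset ι) (r : ℕ) :
    #{t : Finset ι | #(s ∆ t) < r} = ∑ k ∈ range r, (Fintype.card ι).choose k := by
  have hshift : #{t : Finset ι | #(s ∆ t) < r} = #{u : Finset ι | #u < r} :=
    card_nbij' (s ∆ ·) (s ∆ ·) (by intro t; simp) (by intro u; simp)
      (fun _ _ => symmDiff_symmDiff_cancel_left _ _) (fun _ _ => symmDiff_symmDiff_cancel_left _ _)
  rw [hshift, card_filter, ← powerset_univ,
    sum_powerset_apply_card (fun m => if m < r then 1 else 0), card_univ]
  simp only [smul_eq_mul, mul_ite, mul_one, mul_zero, ← sum_filter]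
  refine sum_subset (fun k hk => by simp at hk ⊢; omega) fun k hk hk' => ?_
  simp only [mem_filter, mem_range] at hk hk'
  exact Nat.choose_eq_zero_of_lt (by omega)

theorem sum_range_choose_mul_pow_le {b d r : ℕ} (hb : 1 ≤ b) (hr : r ≤ d + 1) :
    (∑ k ∈ range r, d.choose k) * b ^ (d + 1 - r) ≤ (b + 1) ^ d := by
  calc (∑ k ∈ range r, d.choose k) * b ^ (d + 1 - r)
      ≤ ∑ k ∈ range r, d.choose k * b ^ (d - k) := by
        rw [sum_mul]
        refine sum_le_sum fun k hk => ?_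
        have := mem_range.1 hk
        exact Nat.mul_le_mul_left _ (Nat.pow_le_pow_right hb (by omega))
    _ ≤ ∑ k ∈ range (d + 1), d.choose k * b ^ (d - k) :=
        sum_le_sum_of_subset (range_subset_range.2 hr)
    _ = (b + 1) ^ d := by
        rw [add_comm b, add_pow]
        exact sum_congr rfl fun k _ => by rw [one_pow, one_mul, Nat.cast_id, mul_comm]

theorem pow_four_mul_le_of_log_le {N d : ℕ} (h : 8 * Real.log N ≤ d) :
    N ^ 4 * 256 ^ d ≤ 432 ^ d := by
  have h8 : (N : ℝ) ^ 8 ≤ Real.exp d := by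
    rcases N.eq_zero_or_pos with rfl | hN
    · simpa using (Real.exp_pos d).le
    calc (N : ℝ) ^ 8 = Real.exp (8 * Real.log N) := by
          rw [show 8 * Real.log N = Real.log (N ^ 8) by rw [Real.log_pow]; norm_num,
            Real.exp_log (by positivity)]
      _ ≤ Real.exp d := Real.exp_le_exp.2 h
  have he : Real.exp d ≤ ((27 / 16 : ℝ) ^ d) ^ 2 := by
    rw [← Real.exp_one_pow, ← pow_mul, mul_comm, pow_mul]
    gcongr
    linarith [Real.exp_one_lt_d9]
  have h4 : (N : ℝ) ^ 4 ≤ (27 / 16) ^ d :=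
    (pow_le_pow_iff_left₀ (by positivity) (by positivity) two_ne_zero).1 (by
      rw [← pow_mul]; exact h8.trans he)
  have : (N : ℝ) ^ 4 * 256 ^ d ≤ 432 ^ d := by
    calc (N : ℝ) ^ 4 * 256 ^ d ≤ (27 / 16) ^ d * 256 ^ d := by gcongr
      _ = 432 ^ d := by rw [← mul_pow]; norm_num
  exact_mod_cast this

theorem mul_sum_range_choose_le_two_pow {N d : ℕ} (h : 8 * Real.log N ≤ d) :
    N * ∑ k ∈ range ((d + 3) / 4), d.choose k ≤ 2 ^ d := by
  set r := (d + 3) / 4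
  set S := ∑ k ∈ range r, d.choose k
  have hS : S * 3 ^ (d + 1 - r) ≤ 4 ^ d := sum_range_choose_mul_pow_le (by norm_num) (by omega)
  have key : (N * S) ^ 4 * 3 ^ (3 * d) ≤ (2 ^ d) ^ 4 * 3 ^ (3 * d) :=
    calc (N * S) ^ 4 * 3 ^ (3 * d) ≤ (N * S) ^ 4 * 3 ^ (4 * (d + 1 - r)) :=
        Nat.mul_le_mul_left _ (Nat.pow_le_pow_right (by norm_num) (by omega))
      _ = N ^ 4 * (S * 3 ^ (d + 1 - r)) ^ 4 := by ring
      _ ≤ N ^ 4 * (4 ^ d) ^ 4 := by gcongr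
      _ = N ^ 4 * 256 ^ d := by rw [← pow_mul, mul_comm d 4, pow_mul]; norm_num
      _ ≤ 432 ^ d := pow_four_mul_le_of_log_le h
      _ = (2 ^ d) ^ 4 * 3 ^ (3 * d) := by
        rw [← pow_mul, mul_comm d, pow_mul, pow_mul, ← mul_pow]; norm_num
  exact (pow_le_pow_iff_left₀ (by positivity) (by positivity) four_ne_zero).1
    (Nat.le_of_mul_le_mul_right key (by positivity))

def signVector {ι : Type*} [DecidableEq ι] (s : Finset ι) (k : ι) : ℝ :=
  if k ∈ s then 1 else -1

theorem signVector_eq_one_or_eq_neg_one {ι : Type*} [DecidableEq ι] (s : Finset ι) (k : ι) :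
    signVector s k = 1 ∨ signVector s k = -1 := by
  unfold signVector; split_ifs <;> simp

theorem sum_abs_sub_signVector {ι : Type*} [Fintype ι] [DecidableEq ι] (s t : Finset ι) :
    ∑ k, |signVector s k - signVector t k| = 2 * #(s ∆ t) := by
  have hterm : ∀ k, |signVector s k - signVector t k| = if k ∈ s ∆ t then 2 else 0 := by
    intro k
    by_cases hs : k ∈ s <;> by_cases ht : k ∈ t <;> norm_num [signVector, mem_symmDiff, hs, ht]
  simp only [hterm, sum_ite_mem, univ_inter, sum_const, nsmul_eq_mul, mul_comm]

/-- For integers `N ≥ 2` and `d ≥ ⌈11·ln N⌉`, there exist vectors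
`x₁,...,x_N ∈ {-1,+1}^d` with pairwise ℓ¹ distance at least `d/2`. -/
theorem exists_separated_sign_vectors
    (N d : ℕ) (hN : 2 ≤ N) (hd : ⌈11 * Real.log N⌉₊ ≤ d) :
    ∃ x : Fin N → Fin d → ℝ,
      (∀ i k, x i k = 1 ∨ x i k = -1) ∧
      ∀ i j, i ≠ j → (d : ℝ) / 2 ≤ ∑ k, |x i k - x j k| := by
  have hlog : 0 < Real.log N := Real.log_pos (by exact_mod_cast hN)
  have hlog_le : 11 * Real.log N ≤ d := Nat.ceil_le.1 hd
  have hd0 : 0 < d := (Nat.ceil_pos.2 (mul_pos (by norm_num) hlog)).trans_le hd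
  have hball_pos : 0 < ∑ k ∈ range ((d + 3) / 4), d.choose k :=
    sum_pos' (fun _ _ => Nat.zero_le _) ⟨0, mem_range.2 (by omega), by simp⟩
  obtain ⟨s, hs⟩ :=
    exists_fin_pairwise_not_rel (fun s t : Finset (Fin d) => #(s ∆ t) < (d + 3) / 4)
      (fun s t => by rw [symmDiff_comm]; exact id) hball_pos
      (fun s => by rw [card_filter_card_symmDiff_lt, Fintype.card_fin]) N
      (by rw [Fintype.card_finset, Fintype.card_fin]
          exact mul_sum_range_choose_le_two_pow (by linarith))
  refine ⟨fun i => signVector (s i), fun i => signVector_eq_one_or_eq_neg_one _,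
    fun i j hij => ?_⟩
  have hsep : (d : ℝ) ≤ 4 * #(s i ∆ s j) := by
    have := hs i j hij
    exact_mod_cast (by omega : d ≤ 4 * #(s i ∆ s j))
  rw [sum_abs_sub_signVector]
  linarith
end

section
/- Let T: S×A → Δ(S) be a transition kernel on finite state space S and action space A, viewed as a matrix in ℝ^{S×(S×A)} with rank d. Then there exists a probability distribution ν ∈ Δ(S) such that T(s'|s,a) ≤ d·ν(s') for all (s,a,s') ∈ S×A×S. -/
/-!
Let `d` be the dimension of the span of the columns `T(·|s,a)`. Among all `d`-tuples of columns
choose one maximising the absolute value of the determinant in a fixed basis of the span. By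
Cramer's rule every column is a combination of the chosen ones whose coefficients are ratios of
determinants, hence of absolute value at most `1`. As the columns are nonnegative, each is
dominated entrywise by the sum of the `d` chosen columns, which is `d` times their average `ν`.
-/

open Function Module Submodule Set

section Field

variable {K E ι n : Type*} [Field K] [AddCommGroup E] [Module K E]

theorem Module.Basis.exists_det_comp_ne_zero [Fintype n] [DecidableEq n] (b : Basis n K E)
    {v : ι → E} (hv : span K (range v) = ⊤) : ∃ c : n → ι, b.det (v ∘ c) ≠ 0 := by
  obtain ⟨κ, a, -, hspan, hli⟩ := exists_linearIndependent' K v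
  let u := Basis.mk hli (by rw [hspan, hv])
  let e := u.indexEquiv b
  refine ⟨a ∘ e.symm, ?_⟩
  have hu : v ∘ a ∘ e.symm = u.reindex e := by ext; simp [u]
  rw [hu]
  exact (b.isUnit_det _).ne_zero

end Field

section OrderedField

variable (K : Type*) {E ι n : Type*} [Field K] [LinearOrder K] [IsStrictOrderedRing K]
  [AddCommGroup E] [Module K E]

def IsBarycentricSpanner [Fintype n] (v : ι → E) (c : n → ι) : Prop :=
  ∀ j, ∃ μ : n → K, (∀ k, |μ k| ≤ 1) ∧ ∑ k, μ k • v (c k) = v j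

variable {K}

theorem exists_isBarycentricSpanner [Finite ι] [Fintype n] [DecidableEq n] (b : Basis n K E)
    {v : ι → E} (hv : span K (range v) = ⊤) : ∃ c : n → ι, IsBarycentricSpanner K v c := by
  obtain ⟨c₀, hc₀⟩ := b.exists_det_comp_ne_zero hv
  have : Nonempty (n → ι) := ⟨c₀⟩
  obtain ⟨c, hc⟩ := Finite.exists_max fun c : n → ι => |b.det (v ∘ c)|
  have hdet : b.det (v ∘ c) ≠ 0 := abs_pos.mp ((abs_pos.mpr hc₀).trans_le (hc c₀))
  obtain ⟨hli, hsp⟩ := b.is_basis_iff_det.mpr (Ne.isUnit hdet)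
  let u := Basis.mk hli hsp.ge
  refine ⟨c, fun j => ⟨fun k => u.coord k (v j), fun k => ?_, by simpa [u] using u.sum_repr (v j)⟩⟩
  -- Cramer's rule: `det (v ∘ c) * coord k (v j) = det (v ∘ update c k j)`.
  have hcoord := congr($(b.det_smul_mk_coord_eq_det_update hli hsp.ge k) (v j))
  simp only [LinearMap.smul_apply, smul_eq_mul, MultilinearMap.toLinearMap_apply,
    AlternatingMap.coe_multilinearMap, ← comp_update] at hcoord
  have hmax := hc (update c k j)
  rw [← hcoord, abs_mul, mul_le_iff_le_one_right (abs_pos.mpr hdet)] at hmax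
  exact hmax

theorem exists_isBarycentricSpanner_of_finrank_span_eq [Finite ι] (v : ι → E) {d : ℕ}
    (hd : finrank K (span K (range v)) = d) :
    ∃ c : Fin d → ι, IsBarycentricSpanner K v c := by
  let w : ι → span K (range v) := fun j => ⟨v j, subset_span (mem_range_self j)⟩
  have hw : span K (range w) = ⊤ := by
    convert span_span_coe_preimage (R := K) (s := range v)
    ext x
    simp [w, Subtype.ext_iff]
  have : FiniteDimensional K (span K (range v)) := .span_of_finite K (finite_range v)
  obtain ⟨c, hc⟩ := exists_isBarycentricSpanner (finBasisOfFinrankEq K _ hd) hw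
  refine ⟨c, fun j => ?_⟩
  obtain ⟨μ, hμ, hsum⟩ := hc j
  exact ⟨μ, hμ, by simpa [w] using congrArg Subtype.val hsum⟩

theorem IsBarycentricSpanner.le_sum {S : Type*} [Fintype n] {v : ι → S → K} {c : n → ι}
    (h : IsBarycentricSpanner K v c) (hv : ∀ j s, 0 ≤ v j s) (j : ι) (s : S) :
    v j s ≤ ∑ k, v (c k) s := by
  obtain ⟨μ, hμ, hsum⟩ := h j
  rw [← hsum, Finset.sum_apply]
  exact Finset.sum_le_sum fun k _ =>
    mul_le_of_le_one_left (hv _ s) ((le_abs_self _).trans (hμ k))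

end OrderedField

/-- If `T : S×A → Δ(S)` is a transition kernel on finite spaces, viewed
as a matrix in `ℝ^{S×(S×A)}` of rank `d`, then there exists a distribution `ν ∈ Δ(S)`
with `T(s'|s,a) ≤ d·ν(s')` for all `(s,a,s')`. -/
theorem exists_dominating_distribution_of_rank
    {S A : Type*} [Fintype S] [Nonempty S] [Fintype A]
    (T : S → A → S → ℝ)
    (hT0 : ∀ s a s', 0 ≤ T s a s') (hT1 : ∀ s a, ∑ s', T s a s' = 1)
    (d : ℕ)
    (hrank : (Matrix.of fun (s' : S) (sa : S × A) => T sa.1 sa.2 s' :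
        Matrix S (S × A) ℝ).rank = d) :
    ∃ ν : S → ℝ, (∀ s', 0 ≤ ν s') ∧ (∑ s', ν s' = 1) ∧
      ∀ s a s', T s a s' ≤ (d : ℝ) * ν s' := by
  obtain ⟨c, hc⟩ := exists_isBarycentricSpanner_of_finrank_span_eq (K := ℝ) (d := d)
    (fun sa : S × A => fun s' => T sa.1 sa.2 s')
    (by rw [← hrank, Matrix.rank_eq_finrank_span_cols]; rfl)
  have hdom := hc.le_sum fun sa s' => hT0 sa.1 sa.2 s'
  rcases Nat.eq_zero_or_pos d with rfl | hd
  · refine ⟨fun _ => (Fintype.card S : ℝ)⁻¹, fun _ => by positivity, by simp, fun s a s' => ?_⟩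
    simpa using hdom (s, a) s'
  · refine ⟨fun s' => (d : ℝ)⁻¹ * ∑ k, T (c k).1 (c k).2 s',
      fun s' => mul_nonneg (by positivity) (Finset.sum_nonneg fun k _ => hT0 _ _ _), ?_,
      fun s a s' => ?_⟩
    · rw [← Finset.mul_sum, Finset.sum_comm]
      simp [hT1, hd.ne']
    · rw [← mul_assoc, mul_inv_cancel₀ (by positivity), one_mul]
      exact hdom (s, a) s'
end

section
/- Coverage-based eluder bound: let p₁,...,p_K be probability distributions on a finite set X, and suppose there exists μ ∈ Δ(X) with p_k(x)/μ(x) ≤ C for all x ∈ X (where p_k(x) > 0) and all k ∈ [K]. Then for any functions f₁,...,f_K: X → [0,1] and any constant M ≥ 1, ∑_{k=1}^K E_{x∼p_k}[f_k(x)] ≤ √( 2C·log(1 + CK/M)·( 2KM + ∑_{k=1}^K ∑_{t<k} E_{x∼p_t}[f_k(x)²] ) ). -/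
/-!
Put `w_k(x) = ∑_{t<k} p_t(x) + p_k(x) + M μ(x)`. Cauchy–Schwarz gives
`(∑_k E_{p_k}[f_k])² ≤ (∑_{k,x} p_k(x)²/w_k(x)) · (∑_{k,x} w_k(x) f_k(x)²)`.
The second factor is at most `∑_k ∑_{t<k} E_{p_t}[f_k²] + K(1 + M)` because `f_k² ≤ 1`.
For the first, coverage gives `p_k(x)²/w_k(x) ≤ C μ(x) · p_k(x)/w_k(x)`, and at each point `x`
the ratios `p_k(x)/w_k(x)` telescope against `log` of the partial sums `M μ(x) + ∑_{t<k} p_t(x)`,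
so their sum is at most `log(1 + CK/M)`.
-/

open Finset Real

theorem div_add_le_log_add_sub_log {s b : ℝ} (hs : 0 < s) (hb : 0 ≤ b) :
    b / (s + b) ≤ log (s + b) - log s := by
  have h := one_sub_inv_le_log_of_pos (show 0 < (s + b) / s by positivity)
  rwa [inv_div, log_div (by positivity) hs.ne', one_sub_div (by positivity),
    add_sub_cancel_left] at h

theorem sum_div_cumsum_le_log_sub_log {K : ℕ} (b : Fin K → ℝ) (hb : ∀ k, 0 ≤ b k) {a : ℝ}
    (ha : 0 < a) :
    ∑ k, b k / (∑ t ∈ univ.filter (· < k), b t + b k + a) ≤ log (∑ k, b k + a) - log a := by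
  set S : ℕ → ℝ := fun n => ∑ t ∈ univ.filter (fun t : Fin K => (t : ℕ) < n), b t
  have hS_nonneg : ∀ n, 0 ≤ S n := fun n => sum_nonneg fun t _ => hb t
  have hS_coe : ∀ k : Fin K, S k = ∑ t ∈ univ.filter (· < k), b t := fun k => rfl
  have hS_succ : ∀ k : Fin K, S (k + 1) = S k + b k := by
    intro k
    have : univ.filter (fun t : Fin K => (t : ℕ) < k + 1) = insert k (univ.filter (· < k)) := by
      ext t
      simp only [mem_filter, mem_univ, true_and, mem_insert, Fin.lt_def, Fin.ext_iff]
      omega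
    simp only [S, this, sum_insert (by simp : k ∉ univ.filter (· < k)), add_comm (b k)]
    rfl
  calc ∑ k, b k / (∑ t ∈ univ.filter (· < k), b t + b k + a)
      ≤ ∑ k : Fin K, (log (S (k + 1) + a) - log (S k + a)) := by
        refine sum_le_sum fun k _ => ?_
        have h := div_add_le_log_add_sub_log (s := S k + a) (by linarith [hS_nonneg k]) (hb k)
        rwa [← hS_coe, hS_succ, add_right_comm]
    _ = log (S K + a) - log (S 0 + a) := by
        rw [Fin.sum_univ_eq_sum_range (fun n => log (S (n + 1) + a) - log (S n + a)),
          sum_range_sub (fun n => log (S n + a))]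
    _ = log (∑ k, b k + a) - log a := by
        simp [S]

theorem sum_sq_div_cumsum_le {K : ℕ} (b : Fin K → ℝ) (hb : ∀ k, 0 ≤ b k) {a c : ℝ} (ha : 0 < a)
    (hc : 0 ≤ c) (hbc : ∀ k, b k ≤ c) :
    ∑ k, b k ^ 2 / (∑ t ∈ univ.filter (· < k), b t + b k + a) ≤ c * log (1 + K * c / a) := by
  have hsum0 : 0 ≤ ∑ k, b k := sum_nonneg fun k _ => hb k
  have hsum : ∑ k, b k ≤ K * c := by simpa using sum_le_sum fun k (_ : k ∈ univ) => hbc k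
  calc ∑ k, b k ^ 2 / (∑ t ∈ univ.filter (· < k), b t + b k + a)
      ≤ ∑ k, c * (b k / (∑ t ∈ univ.filter (· < k), b t + b k + a)) := by
        refine sum_le_sum fun k _ => ?_
        have hw : 0 ≤ ∑ t ∈ univ.filter (· < k), b t + b k + a := by
          linarith [sum_nonneg fun t (_ : t ∈ univ.filter (· < k)) => hb t, hb k]
        rw [sq, mul_div_assoc]
        exact mul_le_mul_of_nonneg_right (hbc k) (div_nonneg (hb k) hw)
    _ = c * ∑ k, b k / (∑ t ∈ univ.filter (· < k), b t + b k + a) := (mul_sum ..).symm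
    _ ≤ c * (log (∑ k, b k + a) - log a) :=
        mul_le_mul_of_nonneg_left (sum_div_cumsum_le_log_sub_log b hb ha) hc
    _ = c * log (1 + (∑ k, b k) / a) := by
        rw [← log_div (by linarith) ha.ne', add_div, div_self ha.ne', add_comm]
    _ ≤ c * log (1 + K * c / a) := by
        gcongr

theorem sq_sum_mul_le_sum_sq_div_mul_sum_mul_sq {ι : Type*} (s : Finset ι) (a g w : ι → ℝ)
    (hw : ∀ i ∈ s, 0 ≤ w i) (ha : ∀ i ∈ s, w i = 0 → a i = 0) :
    (∑ i ∈ s, a i * g i) ^ 2 ≤ (∑ i ∈ s, a i ^ 2 / w i) * ∑ i ∈ s, w i * g i ^ 2 := by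
  refine sum_sq_le_sum_mul_sum_of_sq_le_mul s (fun i hi => div_nonneg (sq_nonneg _) (hw i hi))
    (fun i hi => mul_nonneg (hw i hi) (sq_nonneg _)) fun i hi => ?_
  rcases (hw i hi).eq_or_lt with h | h
  · simp [ha i hi h.symm]
  · rw [mul_pow, div_mul_eq_mul_div, mul_div_assoc, mul_div_cancel_left₀ _ h.ne']

theorem sum_mul_le_one_of_le_one {X : Type*} [Fintype X] {q g : X → ℝ} (hq0 : ∀ x, 0 ≤ q x)
    (hq1 : ∑ x, q x = 1) (hg : ∀ x, g x ≤ 1) : ∑ x, q x * g x ≤ 1 :=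
  hq1 ▸ sum_le_sum fun x _ => mul_le_of_le_one_right (hq0 x) (hg x)

section Coverage

variable {X : Type*} {K : ℕ} (p : Fin K → X → ℝ) (μ : X → ℝ)

def coverageWeight (M : ℝ) (k : Fin K) (x : X) : ℝ :=
  ∑ t ∈ univ.filter (· < k), p t x + p k x + M * μ x

theorem le_coverageWeight (hp0 : ∀ k x, 0 ≤ p k x) (hμ0 : ∀ x, 0 ≤ μ x) {M : ℝ} (hM : 0 ≤ M)
    (k : Fin K) (x : X) : p k x ≤ coverageWeight p μ M k x := by
  unfold coverageWeight
  linarith [sum_nonneg fun t (_ : t ∈ univ.filter (· < k)) => hp0 t x, mul_nonneg hM (hμ0 x)]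

theorem sum_sq_div_coverageWeight_le [Fintype X] (hp0 : ∀ k x, 0 ≤ p k x) (hμ0 : ∀ x, 0 ≤ μ x)
    (hμ1 : ∑ x, μ x = 1) {C : ℝ} (hC : 0 ≤ C) (hcov : ∀ k x, p k x ≤ C * μ x) {M : ℝ}
    (hM : 0 < M) :
    ∑ k, ∑ x, p k x ^ 2 / coverageWeight p μ M k x ≤ C * log (1 + C * K / M) := by
  rw [sum_comm]
  calc ∑ x, ∑ k, p k x ^ 2 / coverageWeight p μ M k x
      ≤ ∑ x, C * μ x * log (1 + C * K / M) := by
        refine sum_le_sum fun x _ => ?_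
        rcases (hμ0 x).eq_or_lt with h | h
        · have hp : ∀ k, p k x = 0 := fun k =>
            le_antisymm (by simpa [← h] using hcov k x) (hp0 k x)
          simp [coverageWeight, hp, ← h]
        · have hratio : (K : ℝ) * (C * μ x) / (M * μ x) = C * K / M := by
            field_simp
          have h := sum_sq_div_cumsum_le (fun k => p k x) (hp0 · x) (by positivity : 0 < M * μ x)
            (by positivity : 0 ≤ C * μ x) (hcov · x)
          rwa [hratio] at h
    _ = C * log (1 + C * K / M) := by rw [← sum_mul, ← mul_sum, hμ1, mul_one]

theorem sum_coverageWeight_mul_sq_le [Fintype X] (hp0 : ∀ k x, 0 ≤ p k x)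
    (hp1 : ∀ k, ∑ x, p k x = 1) (hμ0 : ∀ x, 0 ≤ μ x) (hμ1 : ∑ x, μ x = 1) (f : Fin K → X → ℝ)
    (hf : ∀ k x, 0 ≤ f k x ∧ f k x ≤ 1) {M : ℝ} (hM : 0 ≤ M) :
    ∑ k, ∑ x, coverageWeight p μ M k x * f k x ^ 2 ≤
      ∑ k, ∑ t ∈ univ.filter (· < k), ∑ x, p t x * f k x ^ 2 + K * (1 + M) := by
  have hf2 : ∀ k x, f k x ^ 2 ≤ 1 := fun k x => pow_le_one₀ (hf k x).1 (hf k x).2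
  calc ∑ k, ∑ x, coverageWeight p μ M k x * f k x ^ 2
      = ∑ k, (∑ t ∈ univ.filter (· < k), ∑ x, p t x * f k x ^ 2 + ∑ x, p k x * f k x ^ 2 +
          M * ∑ x, μ x * f k x ^ 2) := by
        refine sum_congr rfl fun k _ => ?_
        simp only [coverageWeight, add_mul, sum_add_distrib, sum_mul, mul_sum, mul_assoc]
        rw [sum_comm]
    _ ≤ ∑ k : Fin K, (∑ t ∈ univ.filter (· < k), ∑ x, p t x * f k x ^ 2 + 1 + M * 1) := by
        gcongr with k
        · exact sum_mul_le_one_of_le_one (hp0 k) (hp1 k) (hf2 k)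
        · exact sum_mul_le_one_of_le_one hμ0 hμ1 (hf2 k)
    _ = ∑ k, ∑ t ∈ univ.filter (· < k), ∑ x, p t x * f k x ^ 2 + K * (1 + M) := by
        simp only [sum_add_distrib, sum_const, card_univ, Fintype.card_fin, nsmul_eq_mul]
        ring

end Coverage

/-- Coverage-based eluder bound: if distributions `p₁,...,p_K` on a
finite set `X` are covered by `μ` with constant `C` (i.e. `p_k ≤ C·μ` pointwise),
then for functions `f_k : X → [0,1]` and `M ≥ 1`,
`∑_k E_{p_k}[f_k] ≤ √(2C·log(1+CK/M)·(2KM + ∑_k ∑_{t<k} E_{p_t}[f_k²]))`. -/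
theorem coverage_eluder_bound
    {X : Type*} [Fintype X] {K : ℕ} (p : Fin K → X → ℝ) (μ : X → ℝ)
    (hp0 : ∀ k x, 0 ≤ p k x) (hp1 : ∀ k, ∑ x, p k x = 1)
    (hμ0 : ∀ x, 0 ≤ μ x) (hμ1 : ∑ x, μ x = 1)
    (C : ℝ) (hC : 1 ≤ C) (hcov : ∀ k x, p k x ≤ C * μ x)
    (f : Fin K → X → ℝ) (hf : ∀ k x, 0 ≤ f k x ∧ f k x ≤ 1)
    (M : ℝ) (hM : 1 ≤ M) :
    ∑ k, ∑ x, p k x * f k x ≤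
      Real.sqrt (2 * C * Real.log (1 + C * K / M) *
        (2 * K * M + ∑ k, ∑ t ∈ Finset.univ.filter (· < k), ∑ x, p t x * f k x ^ 2)) := by
  have hM0 : 0 < M := by linarith
  have hC0 : 0 ≤ C := by linarith
  set S := ∑ k, ∑ t ∈ univ.filter (· < k), ∑ x, p t x * f k x ^ 2
  have hp_le_w := le_coverageWeight p μ hp0 hμ0 hM0.le
  have hw0 : ∀ k x, 0 ≤ coverageWeight p μ M k x := fun k x => (hp0 k x).trans (hp_le_w k x)
  have hCS := sq_sum_mul_le_sum_sq_div_mul_sum_mul_sq univ (fun q : Fin K × X => p q.1 q.2)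
    (fun q => f q.1 q.2) (fun q => coverageWeight p μ M q.1 q.2) (fun q _ => hw0 q.1 q.2)
    (fun q _ hq => le_antisymm (hq ▸ hp_le_w q.1 q.2) (hp0 q.1 q.2))
  simp only [Fintype.sum_prod_type] at hCS
  have hA := sum_sq_div_coverageWeight_le p μ hp0 hμ0 hμ1 hC0 hcov hM0
  have hB : ∑ k, ∑ x, coverageWeight p μ M k x * f k x ^ 2 ≤ 2 * K * M + S := by
    refine (sum_coverageWeight_mul_sq_le p μ hp0 hp1 hμ0 hμ1 f hf hM0.le).trans ?_
    nlinarith [(Nat.cast_nonneg K : (0 : ℝ) ≤ K)]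
  have hL : 0 ≤ log (1 + C * K / M) := log_nonneg (by linarith [(by positivity : 0 ≤ C * K / M)])
  have hB0 : 0 ≤ ∑ k, ∑ x, coverageWeight p μ M k x * f k x ^ 2 :=
    sum_nonneg fun k _ => sum_nonneg fun x _ => mul_nonneg (hw0 k x) (sq_nonneg _)
  refine (le_abs_self _).trans (abs_le_sqrt ?_)
  calc (∑ k, ∑ x, p k x * f k x) ^ 2 ≤ C * log (1 + C * K / M) * (2 * K * M + S) :=
        hCS.trans (mul_le_mul hA hB hB0 (by positivity))
    _ ≤ 2 * C * log (1 + C * K / M) * (2 * K * M + S) := by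
        linarith [mul_nonneg (mul_nonneg hC0 hL) (hB0.trans hB)]
end

section
/- Key step in the coverage eluder argument: let p₁,...,p_K be probability distributions on a finite set X covered by μ with constant C (i.e. p_k ≤ C·μ pointwise), and for M ≥ 1 define p̃_k(x) = M·μ(x) + ∑_{t≤k} p_t(x). Then for every x ∈ X, ∑_{k=1}^K p_k(x)/p̃_k(x) ≤ 2·log(1 + CK/M). -/
/-!
Each term `p_k(x) / p̃_k(x)` is the relative increment of the potential `p̃_k(x)`, hence at most
`log p̃_k(x) - log p̃_{k-1}(x)` by `1 - 1/y ≤ log y`. The sum telescopes to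
`log (p̃_K(x) / (M μ(x)))`, and coverage bounds `p̃_K(x) ≤ M μ(x) + C K μ(x)`; this gives the
bound even without the factor `2`. If `μ(x) = 0`, coverage forces every `p_k(x) = 0`.
-/

open Finset Real

lemma div_add_le_log_sub_log {A a : ℝ} (hA : 0 < A) (ha : 0 ≤ a) :
    a / (A + a) ≤ log (A + a) - log A := by
  have hAa : 0 < A + a := by linarith
  have h := one_sub_inv_le_log_of_pos (div_pos hAa hA)
  rwa [log_div hAa.ne' hA.ne', inv_div, one_sub_div hAa.ne', add_sub_cancel_left] at h

lemma sum_div_add_partialSum_le_log {ι : Type*} [LinearOrder ι] (s : Finset ι) {a : ι → ℝ}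
    {A : ℝ} (hA : 0 < A) (ha : ∀ k ∈ s, 0 ≤ a k) :
    ∑ k ∈ s, a k / (A + ∑ t ∈ s.filter (· ≤ k), a t) ≤ log (A + ∑ k ∈ s, a k) - log A := by
  induction s using Finset.induction_on_max with
  | empty => simp
  | insert m s hlt ih =>
    have hm : m ∉ s := fun h => lt_irrefl m (hlt m h)
    have hs : ∀ k ∈ s, 0 ≤ a k := fun k hk => ha k (mem_insert_of_mem hk)
    have hfilter_of_mem : ∀ k ∈ s, (insert m s).filter (· ≤ k) = s.filter (· ≤ k) := by
      intro k hk
      rw [filter_insert, if_neg (not_le.mpr (hlt k hk))]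
    have hfilter_max : (insert m s).filter (· ≤ m) = insert m s :=
      filter_true_of_mem fun k hk => (mem_insert.mp hk).elim le_of_eq (fun h => (hlt k h).le)
    have hstep := div_add_le_log_sub_log (add_pos_of_pos_of_nonneg hA (sum_nonneg hs))
      (ha m (mem_insert_self m s))
    have hlhs : ∑ k ∈ insert m s, a k / (A + ∑ t ∈ (insert m s).filter (· ≤ k), a t) =
        a m / (A + ∑ k ∈ s, a k + a m) + ∑ k ∈ s, a k / (A + ∑ t ∈ s.filter (· ≤ k), a t) := by
      rw [sum_insert hm, hfilter_max, sum_insert hm, add_comm (a m), ← add_assoc]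
      congr 1
      exact sum_congr rfl fun k hk => by rw [hfilter_of_mem k hk]
    rw [hlhs, sum_insert hm, add_comm (a m), ← add_assoc]
    linarith [ih hs]

theorem coverage_eluder_potential_bound_general
    {X : Type*} [Fintype X] {K : ℕ} (p : Fin K → X → ℝ) (μ : X → ℝ)
    (hp0 : ∀ k x, 0 ≤ p k x)
    (hμ0 : ∀ x, 0 ≤ μ x)
    (C : ℝ) (hC : 1 ≤ C) (hcov : ∀ k x, p k x ≤ C * μ x)
    (M : ℝ) (hM : 1 ≤ M) (x : X) :
    ∑ k : Fin K, p k x / (M * μ x + ∑ t ∈ Finset.univ.filter (· ≤ k), p t x) ≤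
      2 * Real.log (1 + C * K / M) := by
  have hM0 : 0 < M := by linarith
  have hlog_nonneg : 0 ≤ log (1 + C * K / M) := log_nonneg (by bound)
  rcases (hμ0 x).eq_or_lt with hμx | hμx
  · have hp_zero : ∀ k, p k x = 0 := fun k =>
      le_antisymm (by simpa [← hμx] using hcov k x) (hp0 k x)
    simp only [hp_zero, zero_div, sum_const_zero]
    positivity
  have hA : 0 < M * μ x := by positivity
  have hsum : ∑ k : Fin K, p k x ≤ K * (C * μ x) := by
    simpa using sum_le_sum fun k (_ : k ∈ univ) => hcov k x
  have hA_le : M * μ x ≤ M * μ x + ∑ k : Fin K, p k x :=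
    le_add_of_nonneg_right (sum_nonneg fun k _ => hp0 k x)
  have htotal : log (M * μ x + ∑ k : Fin K, p k x) - log (M * μ x) ≤ log (1 + C * K / M) := by
    rw [← log_div (hA.trans_le hA_le).ne' hA.ne']
    refine log_le_log (div_pos (hA.trans_le hA_le) hA) ?_
    rw [div_le_iff₀ hA]
    calc M * μ x + ∑ k : Fin K, p k x ≤ M * μ x + K * (C * μ x) := by linarith
      _ = (1 + C * K / M) * (M * μ x) := by field_simp
  linarith [sum_div_add_partialSum_le_log univ hA fun k _ => hp0 k x]

/-- Key step in the coverage eluder argument: with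
`p̃_k(x) = M·μ(x) + ∑_{t≤k} p_t(x)`, for every `x`,
`∑_k p_k(x)/p̃_k(x) ≤ 2·log(1 + CK/M)`. -/
theorem coverage_eluder_potential_bound
    {X : Type*} [Fintype X] {K : ℕ} (p : Fin K → X → ℝ) (μ : X → ℝ)
    (hp0 : ∀ k x, 0 ≤ p k x) (hp1 : ∀ k, ∑ x, p k x = 1)
    (hμ0 : ∀ x, 0 ≤ μ x) (hμ1 : ∑ x, μ x = 1)
    (C : ℝ) (hC : 1 ≤ C) (hcov : ∀ k x, p k x ≤ C * μ x)
    (M : ℝ) (hM : 1 ≤ M) (x : X) :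
    ∑ k : Fin K, p k x / (M * μ x + ∑ t ∈ Finset.univ.filter (· ≤ k), p t x) ≤
      2 * Real.log (1 + C * K / M) :=
  coverage_eluder_potential_bound_general p μ hp0 hμ0 C hC hcov M hM x
end

section
/- Orthogonal polynomial identity for tensorized perturbed uniform distributions: for x ∈ [-1,1]^d define Q_x ∈ Δ([2d]) by Q_x(2i-1) = (1+x[i])/(2d) and Q_x(2i) = (1-x[i])/(2d) for i ∈ [d]. Then for any x, y ∈ [-1,1]^d and integer n ≥ 1, ∑_{o ∈ [2d]^n} (Q_x^{⊗n}(o)·Q_y^{⊗n}(o)) / Q_0^{⊗n}(o) = (1 + ⟨x,y⟩/d)^n. -/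
/-- The perturbed-uniform distribution `Q_x` on `[2d]`, encoded on `Fin d × Bool`:
`Q_x (i, true) = (1 + x i)/(2d)` and `Q_x (i, false) = (1 - x i)/(2d)`. -/
noncomputable def Qdist (d : ℕ) (x : Fin d → ℝ) : Fin d × Bool → ℝ :=
  fun z => (1 + (if z.2 then x z.1 else -x z.1)) / (2 * d)

/-!
The summand factors over the `n` coordinates of `o`, so the sum is the `n`-th power of the
one-letter sum `∑_z Q_x(z) Q_y(z) / Q_0(z)`. Since `Q_0 ≡ 1/(2d)`, the two letters of block `i`
contribute `((1 + xᵢ)(1 + yᵢ) + (1 - xᵢ)(1 - yᵢ)) / (2d) = (1 + xᵢ yᵢ) / d`.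
-/

open Finset

theorem Fintype.sum_pi_prod_mul_prod_div_prod {K α : Type*} [Field K] [Fintype α]
    (n : ℕ) (p q r : α → K) :
    ∑ o : Fin n → α, (∏ j, p (o j)) * (∏ j, q (o j)) / ∏ j, r (o j) =
      (∑ a, p a * q a / r a) ^ n := by
  rw [Fintype.sum_pow]
  refine Finset.sum_congr rfl fun o _ => ?_
  rw [Finset.prod_div_distrib, Finset.prod_mul_distrib]

theorem sum_bool_Qdist_mul_Qdist_div_Qdist_zero {d : ℕ} (hd : d ≠ 0) (x y : Fin d → ℝ)
    (i : Fin d) :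
    ∑ b : Bool, Qdist d x (i, b) * Qdist d y (i, b) / Qdist d (fun _ => 0) (i, b) =
      (1 + x i * y i) / d := by
  simp only [Fintype.sum_bool, Qdist, if_true, Bool.false_eq_true, if_false]
  field_simp
  ring

theorem sum_Qdist_mul_Qdist_div_Qdist_zero {d : ℕ} (hd : d ≠ 0) (x y : Fin d → ℝ) :
    ∑ z, Qdist d x z * Qdist d y z / Qdist d (fun _ => 0) z = 1 + (∑ i, x i * y i) / d := by
  have hd' : (d : ℝ) ≠ 0 := Nat.cast_ne_zero.mpr hd
  rw [Fintype.sum_prod_type]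
  simp_rw [sum_bool_Qdist_mul_Qdist_div_Qdist_zero hd, ← sum_div, sum_add_distrib, sum_const,
    card_univ, Fintype.card_fin, nsmul_one, add_div, div_self hd']

theorem tensor_perturbed_uniform_inner_product_identity_general
    (d n : ℕ) (hd : 1 ≤ d) (x y : Fin d → ℝ) :
    ∑ o : Fin n → Fin d × Bool,
        (∏ j, Qdist d x (o j)) * (∏ j, Qdist d y (o j)) /
          ∏ j, Qdist d (fun _ => 0) (o j) =
      (1 + (∑ i, x i * y i) / d) ^ n := by
  rw [Fintype.sum_pi_prod_mul_prod_div_prod,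
    sum_Qdist_mul_Qdist_div_Qdist_zero (Nat.one_le_iff_ne_zero.mp hd)]

/-- Orthogonal polynomial identity for tensorized perturbed uniform
distributions: `∑_o Q_x^{⊗n}(o)·Q_y^{⊗n}(o)/Q_0^{⊗n}(o) = (1 + ⟨x,y⟩/d)^n`. -/
theorem tensor_perturbed_uniform_inner_product_identity
    (d n : ℕ) (hd : 1 ≤ d) (hn : 1 ≤ n) (x y : Fin d → ℝ)
    (hx : ∀ i, -1 ≤ x i ∧ x i ≤ 1) (hy : ∀ i, -1 ≤ y i ∧ y i ≤ 1) :
    ∑ o : Fin n → Fin d × Bool,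
        (∏ j, Qdist d x (o j)) * (∏ j, Qdist d y (o j)) /
          ∏ j, Qdist d (fun _ => 0) (o j) =
      (1 + (∑ i, x i * y i) / d) ^ n :=
  tensor_perturbed_uniform_inner_product_identity_general d n hd x y
end

section
/- Moment-matching TV bound for mixtures of product distributions: for x ∈ [-1,1]^d define Q_x ∈ Δ([2d]) by Q_x(2i-1) = (1+x[i])/(2d), Q_x(2i) = (1-x[i])/(2d). Then for any probability distributions μ, ν on [-1,1]^d and integer n ≥ 1, D_TV( E_{x∼μ}[Q_x^{⊗n}], E_{y∼ν}[Q_y^{⊗n}] )² ≤ (1/4)·∑_{ℓ=0}^n C(n,ℓ)·d^{-ℓ}·‖Δ_ℓ‖₂², where Δ_ℓ = E_{x∼μ}[x^{⊗ℓ}] − E_{y∼ν}[y^{⊗ℓ}] ∈ ℝ^{d^ℓ}. -/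
/-!
Write the difference of the two mixtures as one signed mixture `f = ∑ₐ cₐ Q_{Xₐ}^{⊗n}`.
Cauchy–Schwarz over the `(2d)ⁿ` outcomes gives `(∑ₒ |f o|)² ≤ (2d)ⁿ ∑ₒ f(o)²`; the rest is an
identity. `∑ₒ f(o)² = ∑_{a,b} cₐ c_b ⟨Q_{Xₐ}, Q_{X_b}⟩ⁿ`, the collision sum is
`⟨Q_x, Q_y⟩ = (1 + ⟨x, y⟩/d)/(2d)`, and expanding `(1 + ⟨x, y⟩/d)ⁿ` binomially with
`⟨x, y⟩^ℓ = ⟨x^{⊗ℓ}, y^{⊗ℓ}⟩` gives `(2d)ⁿ ∑ₒ f(o)² = ∑_ℓ C(n,ℓ) d^{-ℓ} ‖∑ₐ cₐ Xₐ^{⊗ℓ}‖²`.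
-/

open Finset

theorem sum_sq_sum_mul_prod {ι α R : Type*} [Fintype ι] [Fintype α] [CommSemiring R]
    (c : ι → R) (P : ι → α → R) (n : ℕ) :
    ∑ o : Fin n → α, (∑ a, c a * ∏ j, P a (o j)) ^ 2 =
      ∑ a, ∑ b, c a * c b * (∑ z, P a z * P b z) ^ n := by
  simp_rw [sq, sum_mul_sum]
  rw [sum_comm]
  refine sum_congr rfl fun a _ => ?_
  rw [sum_comm]
  refine sum_congr rfl fun b _ => ?_
  rw [Fintype.sum_pow, mul_sum]
  refine sum_congr rfl fun o _ => ?_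
  rw [prod_mul_distrib]
  ring

theorem sum_Qdist_mul_Qdist {d : ℕ} (hd : d ≠ 0) (x y : Fin d → ℝ) :
    ∑ z, Qdist d x z * Qdist d y z = (2 * (d : ℝ))⁻¹ * (1 + (∑ i, x i * y i) / d) := by
  have hd' : (d : ℝ) ≠ 0 := Nat.cast_ne_zero.mpr hd
  have pointwise : ∀ i, (1 + x i) / (2 * d) * ((1 + y i) / (2 * d)) +
      (1 + -x i) / (2 * d) * ((1 + -y i) / (2 * d)) = (2 * (d : ℝ) ^ 2)⁻¹ * (1 + x i * y i) := by
    intro i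
    field_simp
    ring
  simp only [Fintype.sum_prod_type, Fintype.sum_bool, Qdist, if_true, Bool.false_eq_true,
    if_false, pointwise, ← mul_sum, sum_add_distrib, sum_const, card_univ, Fintype.card_fin,
    nsmul_eq_mul, mul_one]
  field_simp

theorem pow_mul_sum_sq_mixture_Qdist {ι : Type*} [Fintype ι] {d : ℕ} (hd : d ≠ 0) (n : ℕ)
    (c : ι → ℝ) (X : ι → Fin d → ℝ) :
    (2 * d : ℝ) ^ n * ∑ o : Fin n → Fin d × Bool, (∑ a, c a * ∏ j, Qdist d (X a) (o j)) ^ 2 =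
      ∑ ℓ ∈ range (n + 1), (n.choose ℓ : ℝ) * ((d : ℝ) ^ ℓ)⁻¹ *
        ∑ g : Fin ℓ → Fin d, (∑ a, c a * ∏ j, X a (g j)) ^ 2 := by
  have binomial : ∀ t : ℝ, (2 * d : ℝ) ^ n * ((2 * (d : ℝ))⁻¹ * (1 + t / d)) ^ n =
      ∑ ℓ ∈ range (n + 1), (n.choose ℓ : ℝ) * ((d : ℝ) ^ ℓ)⁻¹ * t ^ ℓ := by
    intro t
    have : (2 * d : ℝ) ≠ 0 := by positivity
    rw [← mul_pow, ← mul_assoc, mul_inv_cancel₀ this, one_mul, add_comm, add_pow]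
    refine sum_congr rfl fun ℓ _ => ?_
    rw [one_pow, mul_one, div_pow]
    ring
  simp_rw [sum_sq_sum_mul_prod, sum_Qdist_mul_Qdist hd, mul_sum, mul_left_comm _ (c _ * c _),
    binomial, mul_sum]
  calc _ = ∑ a, ∑ ℓ ∈ range (n + 1), ∑ b, _ := sum_congr rfl fun a _ => sum_comm
    _ = _ := sum_comm

theorem sum_sumElim_neg_mul {m₁ m₂ : Type*} [Fintype m₁] [Fintype m₂] {β : Type*}
    (w : m₁ → ℝ) (w' : m₂ → ℝ) (u : m₁ → β) (v : m₂ → β) (F : β → ℝ) :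
    ∑ a, Sum.elim w (fun i => -w' i) a * F (Sum.elim u v a) =
      ∑ i, w i * F (u i) - ∑ i, w' i * F (v i) := by
  simp [Fintype.sum_sum_type, sub_eq_add_neg]

theorem tv_mixture_product_moment_bound_general
    (d n : ℕ) (hd : 1 ≤ d)
    {m₁ m₂ : ℕ} (u : Fin m₁ → Fin d → ℝ) (v : Fin m₂ → Fin d → ℝ)
    (w : Fin m₁ → ℝ) (w' : Fin m₂ → ℝ) :
    ((1 / 2) * ∑ o : Fin n → Fin d × Bool,
        |(∑ i, w i * ∏ j, Qdist d (u i) (o j)) -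
          ∑ i, w' i * ∏ j, Qdist d (v i) (o j)|) ^ 2 ≤
      (1 / 4) * ∑ ℓ ∈ Finset.range (n + 1), (n.choose ℓ : ℝ) * ((d : ℝ) ^ ℓ)⁻¹ *
        ∑ g : Fin ℓ → Fin d,
          ((∑ i, w i * ∏ j, u i (g j)) - ∑ i, w' i * ∏ j, v i (g j)) ^ 2 := by
  set c := Sum.elim w (fun i => -w' i)
  set X := Sum.elim u v
  have mixture (o : Fin n → Fin d × Bool) :
      (∑ i, w i * ∏ j, Qdist d (u i) (o j)) - ∑ i, w' i * ∏ j, Qdist d (v i) (o j) =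
        ∑ a, c a * ∏ j, Qdist d (X a) (o j) :=
    (sum_sumElim_neg_mul w w' u v fun x => ∏ j, Qdist d x (o j)).symm
  have moment (ℓ : ℕ) (g : Fin ℓ → Fin d) :
      (∑ i, w i * ∏ j, u i (g j)) - ∑ i, w' i * ∏ j, v i (g j) =
        ∑ a, c a * ∏ j, X a (g j) :=
    (sum_sumElim_neg_mul w w' u v fun x => ∏ j, x (g j)).symm
  simp_rw [mixture, moment, ← pow_mul_sum_sq_mixture_Qdist (by omega : d ≠ 0) n c X]
  have cauchy_schwarz := sq_sum_le_card_mul_sum_sq (s := univ)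
    (f := fun o : Fin n → Fin d × Bool => |∑ a, c a * ∏ j, Qdist d (X a) (o j)|)
  simp only [sq_abs, card_univ, Fintype.card_fun, Fintype.card_prod, Fintype.card_fin,
    Fintype.card_bool, Nat.cast_pow, Nat.cast_mul, Nat.cast_ofNat, mul_comm _ 2]
    at cauchy_schwarz
  calc _ = (1 / 4) * (∑ o : Fin n → Fin d × Bool,
        |∑ a, c a * ∏ j, Qdist d (X a) (o j)|) ^ 2 := by ring
    _ ≤ _ := by gcongr

/-- Moment-matching TV bound for mixtures of product distributions: for
finitely supported distributions `μ` (atoms `u` with weights `w`) and `ν` (atoms `v`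
with weights `w'`) on `[-1,1]^d`,
`D_TV(E_μ[Q_x^{⊗n}], E_ν[Q_y^{⊗n}])² ≤ (1/4)·∑_{ℓ=0}^n C(n,ℓ)·d^{-ℓ}·‖Δ_ℓ‖₂²`,
where `Δ_ℓ = E_μ[x^{⊗ℓ}] − E_ν[y^{⊗ℓ}]`. -/
theorem tv_mixture_product_moment_bound
    (d n : ℕ) (hd : 1 ≤ d) (hn : 1 ≤ n)
    {m₁ m₂ : ℕ} (u : Fin m₁ → Fin d → ℝ) (v : Fin m₂ → Fin d → ℝ)
    (hu : ∀ i j, -1 ≤ u i j ∧ u i j ≤ 1) (hv : ∀ i j, -1 ≤ v i j ∧ v i j ≤ 1)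
    (w : Fin m₁ → ℝ) (w' : Fin m₂ → ℝ)
    (hw0 : ∀ i, 0 ≤ w i) (hw1 : ∑ i, w i = 1)
    (hw'0 : ∀ i, 0 ≤ w' i) (hw'1 : ∑ i, w' i = 1) :
    ((1 / 2) * ∑ o : Fin n → Fin d × Bool,
        |(∑ i, w i * ∏ j, Qdist d (u i) (o j)) -
          ∑ i, w' i * ∏ j, Qdist d (v i) (o j)|) ^ 2 ≤
      (1 / 4) * ∑ ℓ ∈ Finset.range (n + 1), (n.choose ℓ : ℝ) * ((d : ℝ) ^ ℓ)⁻¹ *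
        ∑ g : Fin ℓ → Fin d,
          ((∑ i, w i * ∏ j, u i (g j)) - ∑ i, w' i * ∏ j, v i (g j)) ^ 2 :=
  tv_mixture_product_moment_bound_general d n hd u v w w'
end

section
/- Bhattacharyya coefficient is maximized by a deterministic Markov policy: fix an LMDP with MDP instances {M_m}, two indices m ≠ l, a step h ≥ 1, and a state s. Then the maximum over all history-dependent randomized policies π of the Bhattacharyya coefficient BC(M_{m,h+1}(π,s), M_{l,h+1}(π,s)) = exp(−D_B(M_{m,h+1}(π,s), M_{l,h+1}(π,s))) is attained by a deterministic Markov policy. Consequently, if an LMDP is ϖ-separated under every deterministic Markov policy, it is ϖ-separated under every randomized history-dependent policy. -/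
/-- The state at step `i` (0-indexed) when starting at `s` and following the trajectory
`τ = ((a₁,s₂),...,(a_k,s_{k+1}))`. -/
def stateAt {S A : Type*} (s : S) {k : ℕ} (τ : Fin k → A × S) : ℕ → S
  | 0 => s
  | i + 1 => if h : i < k then (τ ⟨i, h⟩).2 else s

/-- The history `((s₁,a₁),...,(s_i,a_i))` of state-action pairs before step `i`. -/
def histAt {S A : Type*} [Inhabited A] (s : S) {k : ℕ} (τ : Fin k → A × S) (i : ℕ) :
    List (S × A) :=
  (List.range i).map fun j => (stateAt s τ j, if h : j < k then (τ ⟨j, h⟩).1 else default)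

/-- The probability of the trajectory `τ = (a₁,s₂,...,a_k,s_{k+1})` when running the
(history-dependent) policy `π` in the MDP with transition kernel `T`, starting at `s`. -/
noncomputable def trajP {S A : Type*} [Inhabited A]
    (T : S → A → S → ℝ) (π : List (S × A) → S → A → ℝ) (s : S) {k : ℕ}
    (τ : Fin k → A × S) : ℝ :=
  ∏ i : Fin k,
    (π (histAt s τ i) (stateAt s τ i) (τ i).1 * T (stateAt s τ i) (τ i).1 (τ i).2)

/-- The Bhattacharyya coefficient between the `k`-step trajectory distributions of two
MDPs under policy `π` starting from `s`. -/
noncomputable def trajBC {S A : Type*} [Fintype S] [Fintype A] [Inhabited A]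
    (T₁ T₂ : S → A → S → ℝ) (π : List (S × A) → S → A → ℝ) (s : S) (k : ℕ) : ℝ :=
  ∑ τ : Fin k → A × S, Real.sqrt (trajP T₁ π s τ * trajP T₂ π s τ)

/-- The deterministic Markov policy choosing action `f s h` at state `s` and step `h`
(the step being the length of the history). -/
noncomputable def detPol {S A : Type*} [DecidableEq A] (f : S → ℕ → A) :
    List (S × A) → S → A → ℝ :=
  fun hist s a => if a = f s hist.length then 1 else 0

/-! Since the one-step Bhattacharyya coefficient factorises along trajectories, the `k+1`-step
coefficient under `π` is a `π`-average over the first action `a` of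
`∑ s', √(T₁ s a s' T₂ s a s') · BC_k(s')`, where `BC_k` is the coefficient of the policy continued
after `(s, a)`. By induction on the horizon, `BC_k` is squeezed between the values of two
deterministic Markov policies, built backwards by choosing at time `0` the action that minimises,
resp. maximises, this one-step quantity. The maximiser gives the first claim; the minimiser is
needed for the second because `-log 0 = 0` in Mathlib, so a policy with coefficient `0` must be
matched by a deterministic one. -/

open Finset

section Trajectories

variable {S A : Type*}

lemma stateAt_cons (s : S) (p : A × S) {k : ℕ} (τ : Fin k → A × S) {j : ℕ} (hj : j ≤ k) :
    stateAt s (Fin.cons p τ : Fin (k + 1) → A × S) (j + 1) = stateAt p.2 τ j := by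
  cases j with
  | zero => rfl
  | succ i =>
    have hi : i < k := by omega
    simp only [stateAt, dif_pos hi, dif_pos (Nat.succ_lt_succ hi)]
    exact Fin.cons_succ (α := fun _ => A × S) p τ ⟨i, hi⟩ ▸ rfl

variable [Inhabited A]

lemma histAt_cons (s : S) (p : A × S) {k : ℕ} (τ : Fin k → A × S) {i : ℕ} (hi : i ≤ k) :
    histAt s (Fin.cons p τ : Fin (k + 1) → A × S) (i + 1) = (s, p.1) :: histAt p.2 τ i := by
  unfold histAt
  rw [List.range_succ_eq_map, List.map_cons, List.map_map]
  congr 1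
  refine List.map_congr_left fun j hj => ?_
  have hj : j < k := (List.mem_range.mp hj).trans_le hi
  simp only [Function.comp_apply, dif_pos hj, dif_pos (Nat.succ_lt_succ hj),
    stateAt_cons s p τ hj.le]
  exact Fin.cons_succ (α := fun _ => A × S) p τ ⟨j, hj⟩ ▸ rfl

lemma trajP_cons (T : S → A → S → ℝ) (π : List (S × A) → S → A → ℝ) (s : S)
    (p : A × S) {k : ℕ} (τ : Fin k → A × S) :
    trajP T π s (Fin.cons p τ) =
      π [] s p.1 * T s p.1 p.2 * trajP T (fun hist => π ((s, p.1) :: hist)) p.2 τ := by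
  unfold trajP
  rw [Fin.prod_univ_succ]
  congr 1
  refine prod_congr rfl fun i _ => ?_
  rw [Fin.val_succ, Fin.cons_succ, stateAt_cons s p τ i.isLt.le, histAt_cons s p τ i.isLt.le]

end Trajectories

lemma sum_fun_fin_succ {X M : Type*} [Fintype X] [AddCommMonoid M] {k : ℕ}
    (F : (Fin (k + 1) → X) → M) :
    ∑ τ : Fin (k + 1) → X, F τ = ∑ x : X, ∑ τ : Fin k → X, F (Fin.cons x τ) := by
  rw [← Fintype.sum_prod_type']
  exact (Fintype.sum_equiv (Fin.consEquiv fun _ => X) _ F fun _ => rfl).symm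

section BhattacharyyaRecursion

variable {S A : Type*} [Fintype S]

/-- The Bhattacharyya coefficient of one step from `(s, a)` followed by a continuation whose
coefficient from the next state `s'` is `V s'`. -/
noncomputable def bcStep (T₁ T₂ : S → A → S → ℝ) (V : S → ℝ) (s : S) (a : A) : ℝ :=
  ∑ s', √(T₁ s a s' * T₂ s a s') * V s'

lemma bcStep_mono {T₁ T₂ : S → A → S → ℝ} {V W : S → ℝ} (hVW : V ≤ W) (s : S) (a : A) :
    bcStep T₁ T₂ V s a ≤ bcStep T₁ T₂ W s a :=
  sum_le_sum fun s' _ => mul_le_mul_of_nonneg_left (hVW s') (Real.sqrt_nonneg _)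

variable [Fintype A] [Inhabited A] (T₁ T₂ : S → A → S → ℝ)

lemma trajBC_nonneg (π : List (S × A) → S → A → ℝ) (s : S) (k : ℕ) :
    0 ≤ trajBC T₁ T₂ π s k :=
  sum_nonneg fun _ _ => Real.sqrt_nonneg _

lemma trajBC_zero (π : List (S × A) → S → A → ℝ) (s : S) : trajBC T₁ T₂ π s 0 = 1 := by
  simp [trajBC, trajP]

variable {T₁ T₂}

lemma trajBC_succ (hT₁ : ∀ s a s', 0 ≤ T₁ s a s') (hT₂ : ∀ s a s', 0 ≤ T₂ s a s')
    {π : List (S × A) → S → A → ℝ} (hπ : ∀ hist s a, 0 ≤ π hist s a) (s : S) (k : ℕ) :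
    trajBC T₁ T₂ π s (k + 1) = ∑ a, π [] s a *
      bcStep T₁ T₂ (fun s' => trajBC T₁ T₂ (fun hist => π ((s, a) :: hist)) s' k) s a := by
  rw [trajBC, sum_fun_fin_succ, Fintype.sum_prod_type]
  refine sum_congr rfl fun a _ => ?_
  simp only [bcStep, trajBC, mul_sum]
  refine sum_congr rfl fun s' _ => sum_congr rfl fun τ _ => ?_
  rw [trajP_cons, trajP_cons,
    show ∀ x y z u w : ℝ, x * y * z * (x * u * w) = x * x * (y * u * (z * w)) by
      intros; ring,
    Real.sqrt_mul (mul_self_nonneg _), Real.sqrt_mul_self (hπ [] s a),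
    Real.sqrt_mul (mul_nonneg (hT₁ _ _ _) (hT₂ _ _ _))]

end BhattacharyyaRecursion

section DeterministicMarkov

variable {S A : Type*} [DecidableEq A]

def consDecision (a : S → A) (f : S → ℕ → A) : S → ℕ → A
  | s, 0 => a s
  | s, j + 1 => f s j

lemma detPol_nonneg (f : S → ℕ → A) (hist : List (S × A)) (s : S) (a : A) :
    0 ≤ detPol f hist s a := by
  unfold detPol
  positivity

variable [Fintype S] [Fintype A] [Inhabited A] {T₁ T₂ : S → A → S → ℝ}

lemma trajBC_detPol_consDecision (hT₁ : ∀ s a s', 0 ≤ T₁ s a s') (hT₂ : ∀ s a s', 0 ≤ T₂ s a s')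
    (a : S → A) (f : S → ℕ → A) (s : S) (k : ℕ) :
    trajBC T₁ T₂ (detPol (consDecision a f)) s (k + 1) =
      bcStep T₁ T₂ (fun s' => trajBC T₁ T₂ (detPol f) s' k) s (a s) := by
  rw [trajBC_succ hT₁ hT₂ (detPol_nonneg _)]
  have hshift (b : A) : (fun hist => detPol (consDecision a f) ((s, b) :: hist)) = detPol f := rfl
  have hfirst : detPol (consDecision a f) [] s = fun b => if b = a s then 1 else 0 := rfl
  simp only [hshift, hfirst, ite_mul, one_mul, zero_mul, Fintype.sum_ite_eq']

theorem exists_detPol_trajBC_le_le (hT₁ : ∀ s a s', 0 ≤ T₁ s a s')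
    (hT₂ : ∀ s a s', 0 ≤ T₂ s a s') (k : ℕ) :
    ∃ fmin fmax : S → ℕ → A, ∀ π : List (S × A) → S → A → ℝ,
      (∀ hist s a, 0 ≤ π hist s a) → (∀ hist s, ∑ a, π hist s a = 1) → ∀ s,
        trajBC T₁ T₂ (detPol fmin) s k ≤ trajBC T₁ T₂ π s k ∧
          trajBC T₁ T₂ π s k ≤ trajBC T₁ T₂ (detPol fmax) s k := by
  induction k with
  | zero => exact ⟨fun _ _ => default, fun _ _ => default, fun π _ _ s => by simp [trajBC_zero]⟩
  | succ k ih =>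
    obtain ⟨fmin, fmax, hf⟩ := ih
    set Vmin := fun s' => trajBC T₁ T₂ (detPol fmin) s' k
    set Vmax := fun s' => trajBC T₁ T₂ (detPol fmax) s' k
    choose amin hamin using fun s => Finite.exists_min (bcStep T₁ T₂ Vmin s)
    choose amax hamax using fun s => Finite.exists_max (bcStep T₁ T₂ Vmax s)
    refine ⟨consDecision amin fmin, consDecision amax fmax, fun π hπ0 hπ1 s => ?_⟩
    have hcont (a : A) := hf (fun hist => π ((s, a) :: hist)) (fun _ _ _ => hπ0 _ _ _)
      (fun _ _ => hπ1 _ _)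
    rw [trajBC_detPol_consDecision hT₁ hT₂, trajBC_detPol_consDecision hT₁ hT₂,
      trajBC_succ hT₁ hT₂ hπ0]
    simp_rw [← smul_eq_mul]
    refine (convex_Icc _ _).sum_mem (fun a _ => hπ0 [] s a) (hπ1 [] s) fun a _ => ⟨?_, ?_⟩
    · exact (hamin s a).trans (bcStep_mono (fun s' => (hcont a s').1) s a)
    · exact (bcStep_mono (fun s' => (hcont a s').2) s a).trans (hamax s a)

end DeterministicMarkov

lemma le_neg_log_of_le_of_le {lo b hi w : ℝ} (hlo : 0 ≤ lo) (hlob : lo ≤ b) (hbhi : b ≤ hi)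
    (hwlo : w ≤ -Real.log lo) (hwhi : w ≤ -Real.log hi) : w ≤ -Real.log b := by
  rcases (hlo.trans hlob).eq_or_lt with hb | hb
  · rwa [← hb, ← le_antisymm (hb ▸ hlob) hlo]
  · exact hwhi.trans (neg_le_neg (Real.log_le_log hb hbhi))

theorem bhattacharyya_maximized_by_det_markov_policy_general
    {S A : Type*} [Fintype S] [Fintype A] [Inhabited A] [DecidableEq A] {L : ℕ}
    (T : Fin L → S → A → S → ℝ)
    (hT0 : ∀ m s a s', 0 ≤ T m s a s') :
    (∀ (m l : Fin L), m ≠ l → ∀ (s : S) (h : ℕ), 1 ≤ h →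
      ∃ f : S → ℕ → A,
        ∀ π : List (S × A) → S → A → ℝ,
          (∀ hist s' a, 0 ≤ π hist s' a) → (∀ hist s', ∑ a, π hist s' a = 1) →
          trajBC (T m) (T l) π s h ≤ trajBC (T m) (T l) (detPol f) s h) ∧
    (∀ ϖ : ℕ → ℝ,
      (∀ f : S → ℕ → A, ∀ m l : Fin L, m ≠ l → ∀ h : ℕ, 1 ≤ h → ∀ s : S,
        -Real.log (trajBC (T m) (T l) (detPol f) s (h - 1)) ≥ ϖ h) →
      ∀ π : List (S × A) → S → A → ℝ,
        (∀ hist s' a, 0 ≤ π hist s' a) → (∀ hist s', ∑ a, π hist s' a = 1) →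
        ∀ m l : Fin L, m ≠ l → ∀ h : ℕ, 1 ≤ h → ∀ s : S,
          -Real.log (trajBC (T m) (T l) π s (h - 1)) ≥ ϖ h) := by
  refine ⟨fun m l _ s h _ => ?_, fun ϖ hsep π hπ0 hπ1 m l hml h hh s => ?_⟩
  · obtain ⟨_, fmax, hf⟩ := exists_detPol_trajBC_le_le (hT0 m) (hT0 l) h
    exact ⟨fmax, fun π hπ0 hπ1 => (hf π hπ0 hπ1 s).2⟩
  · obtain ⟨fmin, fmax, hf⟩ := exists_detPol_trajBC_le_le (hT0 m) (hT0 l) (h - 1)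
    obtain ⟨hmin, hmax⟩ := hf π hπ0 hπ1 s
    exact le_neg_log_of_le_of_le (trajBC_nonneg _ _ _ _ _) hmin hmax
      (hsep fmin m l hml h hh s) (hsep fmax m l hml h hh s)

/-- The Bhattacharyya coefficient `BC(M_{m,h+1}(π,s), M_{l,h+1}(π,s))` is
maximized over all history-dependent randomized policies by a deterministic Markov
policy; consequently, if an LMDP is `ϖ`-separated under every deterministic Markov
policy, it is `ϖ`-separated under every randomized history-dependent policy. -/
theorem bhattacharyya_maximized_by_det_markov_policy
    {S A : Type*} [Fintype S] [Fintype A] [Inhabited A] [DecidableEq A] {L : ℕ}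
    (T : Fin L → S → A → S → ℝ)
    (hT0 : ∀ m s a s', 0 ≤ T m s a s') (hT1 : ∀ m s a, ∑ s', T m s a s' = 1) :
    (∀ (m l : Fin L), m ≠ l → ∀ (s : S) (h : ℕ), 1 ≤ h →
      ∃ f : S → ℕ → A,
        ∀ π : List (S × A) → S → A → ℝ,
          (∀ hist s' a, 0 ≤ π hist s' a) → (∀ hist s', ∑ a, π hist s' a = 1) →
          trajBC (T m) (T l) π s h ≤ trajBC (T m) (T l) (detPol f) s h) ∧
    (∀ ϖ : ℕ → ℝ,
      (∀ f : S → ℕ → A, ∀ m l : Fin L, m ≠ l → ∀ h : ℕ, 1 ≤ h → ∀ s : S,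
        -Real.log (trajBC (T m) (T l) (detPol f) s (h - 1)) ≥ ϖ h) →
      ∀ π : List (S × A) → S → A → ℝ,
        (∀ hist s' a, 0 ≤ π hist s' a) → (∀ hist s', ∑ a, π hist s' a = 1) →
        ∀ m l : Fin L, m ≠ l → ∀ h : ℕ, 1 ≤ h → ∀ s : S,
          -Real.log (trajBC (T m) (T l) π s (h - 1)) ≥ ϖ h) :=
  bhattacharyya_maximized_by_det_markov_policy_general T hT0
end
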